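/- arXiv:2001.03268 — 6 statements merged into one kernel-verified Lean document; each statement's English description precedes it below -/
import Mathlib

section
/- Assume 0 ≤ μ ≤ k−1. Then K_1^N(λ)·D_1^N(λ)^T = 0 and K_2^N(λ)·D_2^N(λ)^T = 0 identically in λ; moreover, for every λ_0 ∈ ℂ, the evaluated matrices K_1^N(λ_0) and K_2^N(λ_0) have full row rank and D_1^N(λ_0)^T and D_2^N(λ_0)^T have full column rank (whenever the corresponding matrix is nonempty, i.e. μ ≤ k−2 for K_1^N and μ ≥ 1 for K_2^N). -/
open Polynomial Matrix

noncomputable section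

/-- `gam x j` is the linear polynomial `γ_j(λ) = λ - x_j` (1-based node index). -/
def gam (x : ℕ → ℂ) (j : ℕ) : Polynomial ℂ := X - C (x j)

/-- `nij x i j` is the polynomial `n_i^j(λ) = ∏_{ℓ=i}^{j} γ_ℓ(λ)` (equal to `1` when `j < i`). -/
def nij (x : ℕ → ℂ) (i j : ℕ) : Polynomial ℂ := ∏ l ∈ Finset.Icc i j, gam x l

/-- The matrix pencil `K_1^N(λ)`: a `(k-μ-1) × (k-μ)` block matrix with `n × n` blocks,
whose `(i,i)` block is `-I_n` and whose `(i,i+1)` block is `γ_{k-i}(λ) I_n` (1-based). -/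
def K1N (k μ n : ℕ) (x : ℕ → ℂ) :
    Matrix (Fin (k - μ - 1) × Fin n) (Fin (k - μ) × Fin n) (Polynomial ℂ) :=
  Matrix.of fun p q =>
    (if (q.1 : ℕ) = (p.1 : ℕ) then -1
      else if (q.1 : ℕ) = (p.1 : ℕ) + 1 then gam x (k - 1 - (p.1 : ℕ)) else 0) *
    (if p.2 = q.2 then 1 else 0)

/-- The matrix pencil `K_2^N(λ)`: a `μ × (μ+1)` block matrix with `m × m` blocks,
whose `(i,i)` block is `-I_m` and whose `(i,i+1)` block is `γ_{μ+1-i}(λ) I_m` (1-based). -/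
def K2N (μ m : ℕ) (x : ℕ → ℂ) :
    Matrix (Fin μ × Fin m) (Fin (μ + 1) × Fin m) (Polynomial ℂ) :=
  Matrix.of fun p q =>
    (if (q.1 : ℕ) = (p.1 : ℕ) then -1
      else if (q.1 : ℕ) = (p.1 : ℕ) + 1 then gam x (μ - (p.1 : ℕ)) else 0) *
    (if p.2 = q.2 then 1 else 0)

/-- `D_1^N(λ)^T`: the block column with `k-μ` blocks whose `i`-th block is
`n_{μ+1}^{k-i}(λ) I_n` (1-based). -/
def D1NT (k μ n : ℕ) (x : ℕ → ℂ) :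
    Matrix (Fin (k - μ) × Fin n) (Fin n) (Polynomial ℂ) :=
  Matrix.of fun p t => nij x (μ + 1) (k - 1 - (p.1 : ℕ)) * (if p.2 = t then 1 else 0)

/-- `D_2^N(λ)^T`: the block column with `μ+1` blocks whose `i`-th block is
`n_{μ+1-i}(λ) I_m` (1-based), where `n_j = n_1^j` and `n_0 = 1`. -/
def D2NT (μ m : ℕ) (x : ℕ → ℂ) :
    Matrix (Fin (μ + 1) × Fin m) (Fin m) (Polynomial ℂ) :=
  Matrix.of fun p t => nij x 1 (μ - (p.1 : ℕ)) * (if p.2 = t then 1 else 0)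

def Kmat {R : Type*} [CommRing R] (a b sz : ℕ) (c : ℕ → R) :
    Matrix (Fin a × Fin sz) (Fin b × Fin sz) R :=
  Matrix.of fun p q =>
    (if (q.1 : ℕ) = (p.1 : ℕ) then -1
      else if (q.1 : ℕ) = (p.1 : ℕ) + 1 then c (p.1 : ℕ) else 0) *
    (if p.2 = q.2 then 1 else 0)

def Dmat {R : Type*} [CommRing R] (b sz : ℕ) (d : ℕ → R) :
    Matrix (Fin b × Fin sz) (Fin sz) R :=
  Matrix.of fun p t => d (p.1 : ℕ) * (if p.2 = t then 1 else 0)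

def KmatInv {R : Type*} [CommRing R] (a b sz : ℕ) (c : ℕ → R) :
    Matrix (Fin b × Fin sz) (Fin a × Fin sz) R :=
  Matrix.of fun q p =>
    (if (q.1 : ℕ) ≤ (p.1 : ℕ) then -(∏ l ∈ Finset.Ico (q.1:ℕ) (p.1:ℕ), c l) else 0) *
    (if q.2 = p.2 then 1 else 0)

lemma fin_sum_two {R : Type*} [CommRing R] {b : ℕ} (i : ℕ) (hi : i + 1 < b) (r : R) (f : Fin b → R) :
    ∑ j : Fin b, (if (j:ℕ) = i then -1 else if (j:ℕ) = i + 1 then r else 0) * f j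
      = -f ⟨i, by omega⟩ + r * f ⟨i+1, hi⟩ := by
  have h : ∀ j : Fin b, (if (j:ℕ) = i then -1 else if (j:ℕ) = i + 1 then r else 0) * f j
      = (if j = ⟨i, by omega⟩ then -f j else 0) + (if j = ⟨i+1, hi⟩ then r * f j else 0) := by
    intro j
    have h1 : (j = (⟨i, by omega⟩ : Fin b)) ↔ (j:ℕ) = i := by rw [Fin.ext_iff]
    have h2 : (j = (⟨i+1, hi⟩ : Fin b)) ↔ (j:ℕ) = i + 1 := by rw [Fin.ext_iff]
    split_ifs with e1 e2 <;> simp_all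
  rw [Finset.sum_congr rfl (fun j _ => h j), Finset.sum_add_distrib,
    Finset.sum_ite_eq' Finset.univ, Finset.sum_ite_eq' Finset.univ]
  simp

lemma Kmat_mul_KmatInv {R : Type*} [CommRing R] (a b sz : ℕ) (hb : b = a + 1) (c : ℕ → R) :
    Kmat a b sz c * KmatInv a b sz c = 1 := by
  subst hb
  ext ⟨i, s⟩ ⟨i', s'⟩
  rw [Matrix.mul_apply, Fintype.sum_prod_type]
  have inner : ∀ j : Fin (a+1),
      ∑ u : Fin sz, Kmat a (a+1) sz c (i,s) (j,u) * KmatInv a (a+1) sz c (j,u) (i',s')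
      = (if (j:ℕ) = (i:ℕ) then -1 else if (j:ℕ) = (i:ℕ)+1 then c (i:ℕ) else 0) *
        ((if (j:ℕ) ≤ (i':ℕ) then -(∏ l ∈ Finset.Ico (j:ℕ) (i':ℕ), c l) else 0) *
          (if s = s' then 1 else 0)) := by
    intro j
    simp [Kmat, KmatInv, mul_ite, ite_mul, Finset.sum_ite_eq, mul_assoc]
    split_ifs <;> simp
  rw [Finset.sum_congr rfl (fun j _ => inner j),
    fin_sum_two (i:ℕ) (by omega) (c (i:ℕ)) _]
  rw [Matrix.one_apply]
  simp only []
  rcases lt_trichotomy (i:ℕ) (i':ℕ) with h | h | h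
  · have h1 : (i:ℕ) ≤ (i':ℕ) := le_of_lt h
    have h2 : (i:ℕ)+1 ≤ (i':ℕ) := h
    have hp : (∏ l ∈ Finset.Ico (i:ℕ) (i':ℕ), c l)
        = c (i:ℕ) * ∏ l ∈ Finset.Ico ((i:ℕ)+1) (i':ℕ), c l :=
      Finset.prod_eq_prod_Ico_succ_bot h c
    have hne : ¬ ((i,s) = ((i':Fin a), s')) := by
      simp [Prod.ext_iff, Fin.ext_iff]; omega
    simp [h1, h2, hp, hne]
  · have hie : ¬ ((i:ℕ)+1 ≤ (i':ℕ)) := by omega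
    have : Finset.Ico (i:ℕ) (i':ℕ) = ∅ := Finset.Ico_eq_empty (by omega)
    have hii : i = i' := Fin.ext h
    subst hii
    simp [hie, this, Prod.ext_iff, Matrix.one_apply]
    split_ifs <;> simp
  · have h1 : ¬ ((i:ℕ) ≤ (i':ℕ)) := by omega
    have h2 : ¬ ((i:ℕ)+1 ≤ (i':ℕ)) := by omega
    have hne : ¬ ((i,s) = ((i':Fin a), s')) := by
      simp [Prod.ext_iff, Fin.ext_iff]; omega
    simp [h1, h2, hne]

lemma Kmat_rank (a b sz : ℕ) (hb : b = a + 1) (c : ℕ → ℂ) :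
    (Kmat a b sz c).rank = a * sz := by
  refine le_antisymm (le_trans (Matrix.rank_le_card_height _) (by simp)) ?_
  have h1 := Matrix.rank_mul_le_left (Kmat a b sz c) (KmatInv a b sz c)
  rw [Kmat_mul_KmatInv a b sz hb c, Matrix.rank_one] at h1
  simpa using h1

lemma Dmat_rank (b sz : ℕ) (d : ℕ → ℂ) (j0 : ℕ) (hj : j0 < b) (hd : d j0 = 1) :
    (Dmat b sz d).rank = sz := by
  refine le_antisymm (le_trans (Matrix.rank_le_card_width _) (by simp)) ?_
  set C : Matrix (Fin sz) (Fin b × Fin sz) ℂ :=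
    Matrix.of fun t q => (if (q.1:ℕ) = j0 then 1 else 0) * (if t = q.2 then 1 else 0) with hC
  have hCD : C * Dmat b sz d = 1 := by
    ext t t'
    rw [Matrix.mul_apply, Fintype.sum_prod_type]
    have inner : ∀ j : Fin b,
        ∑ u : Fin sz, C t (j,u) * Dmat b sz d (j,u) t'
        = (if (j:ℕ) = j0 then 1 else 0) * (d (j:ℕ) * (if t = t' then 1 else 0)) := by
      intro j
      simp [hC, Dmat, mul_ite, ite_mul, Finset.sum_ite_eq, mul_assoc]
    rw [Finset.sum_congr rfl (fun j _ => inner j)]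
    have h : ∀ j : Fin b, (if (j:ℕ) = j0 then 1 else 0) * (d (j:ℕ) * (if t = t' then 1 else 0))
        = (if j = ⟨j0, hj⟩ then d (j:ℕ) * (if t = t' then 1 else 0) else 0) := by
      intro j
      have : (j = (⟨j0, hj⟩ : Fin b)) ↔ (j:ℕ) = j0 := by rw [Fin.ext_iff]
      split_ifs <;> simp_all
    rw [Finset.sum_congr rfl (fun j _ => h j), Finset.sum_ite_eq' Finset.univ]
    simp [hd, Matrix.one_apply]
  have h1 := Matrix.rank_mul_le_right C (Dmat b sz d)
  rw [hCD, Matrix.rank_one] at h1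
  simpa using h1

lemma Kmat_mul_Dmat {R : Type*} [CommRing R] (a b sz : ℕ) (hb : b = a + 1) (c d : ℕ → R)
    (hd : ∀ i, i < a → d i = c i * d (i+1)) :
    Kmat a b sz c * Dmat b sz d = 0 := by
  subst hb
  ext ⟨i, s⟩ t
  rw [Matrix.mul_apply, Fintype.sum_prod_type]
  have inner : ∀ j : Fin (a+1),
      ∑ u : Fin sz, Kmat a (a+1) sz c (i,s) (j,u) * Dmat (a+1) sz d (j,u) t
      = (if (j:ℕ) = (i:ℕ) then -1 else if (j:ℕ) = (i:ℕ)+1 then c (i:ℕ) else 0) *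
        (d (j:ℕ) * (if s = t then 1 else 0)) := by
    intro j
    simp [Kmat, Dmat, mul_ite, ite_mul, Finset.sum_ite_eq, mul_assoc]
  rw [Finset.sum_congr rfl (fun j _ => inner j),
    fin_sum_two (i:ℕ) (by omega) (c (i:ℕ)) _]
  have := hd (i:ℕ) i.isLt
  simp only [Matrix.zero_apply]
  simp [this]

lemma Kmat_map (a b sz : ℕ) (c : ℕ → Polynomial ℂ) (lam : ℂ) :
    (Kmat a b sz c).map (eval lam) = Kmat a b sz (fun i => eval lam (c i)) := by
  ext p q
  simp [Kmat, Matrix.map_apply, apply_ite (eval lam)]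

lemma Dmat_map (b sz : ℕ) (d : ℕ → Polynomial ℂ) (lam : ℂ) :
    (Dmat b sz d).map (eval lam) = Dmat b sz (fun i => eval lam (d i)) := by
  ext p t
  simp [Dmat, Matrix.map_apply, apply_ite (eval lam)]

lemma nij_one (x : ℕ → ℂ) (i j : ℕ) (h : j < i) : nij x i j = 1 := by
  rw [nij, Finset.Icc_eq_empty (by omega), Finset.prod_empty]

/-- Duality and minimality (Lemma on Newton dual minimal bases):
`K_1^N(λ) D_1^N(λ)^T = 0`, `K_2^N(λ) D_2^N(λ)^T = 0`, and for every `λ_0 ∈ ℂ` the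
evaluations of `K_1^N`, `K_2^N` have full row rank (when nonempty) and those of
`D_1^N(λ)^T`, `D_2^N(λ)^T` have full column rank. -/
theorem newton_dual_minimal_bases
    (k μ m n : ℕ) (hk : 2 ≤ k) (hμ : μ ≤ k - 1) (hm : 0 < m) (hn : 0 < n)
    (x : ℕ → ℂ)
    (hx : ∀ i j : ℕ, 1 ≤ i → i ≤ k → 1 ≤ j → j ≤ k → x i = x j → i = j) :
    K1N k μ n x * D1NT k μ n x = 0 ∧
    K2N μ m x * D2NT μ m x = 0 ∧
    (μ ≤ k - 2 → ∀ lam : ℂ, ((K1N k μ n x).map (eval lam)).rank = (k - μ - 1) * n) ∧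
    (1 ≤ μ → ∀ lam : ℂ, ((K2N μ m x).map (eval lam)).rank = μ * m) ∧
    (∀ lam : ℂ, ((D1NT k μ n x).map (eval lam)).rank = n) ∧
    (∀ lam : ℂ, ((D2NT μ m x).map (eval lam)).rank = m) := by
  have e1 : K1N k μ n x = Kmat (k-μ-1) (k-μ) n (fun i => gam x (k-1-i)) := rfl
  have e2 : D1NT k μ n x = Dmat (k-μ) n (fun i => nij x (μ+1) (k-1-i)) := rfl
  have e3 : K2N μ m x = Kmat μ (μ+1) m (fun i => gam x (μ-i)) := rfl
  have e4 : D2NT μ m x = Dmat (μ+1) m (fun i => nij x 1 (μ-i)) := rfl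
  refine ⟨?_, ?_, ?_, ?_, ?_, ?_⟩
  · rw [e1, e2]
    apply Kmat_mul_Dmat _ _ _ (by omega)
    intro i hi
    have h2 : k - 1 - i = (k - 1 - (i+1)) + 1 := by omega
    simp only [nij, h2]
    rw [Finset.prod_Icc_succ_top (by omega)]
    exact mul_comm _ _
  · rw [e3, e4]
    apply Kmat_mul_Dmat _ _ _ rfl
    intro i hi
    have h2 : μ - i = (μ - (i+1)) + 1 := by omega
    simp only [nij, h2]
    rw [Finset.prod_Icc_succ_top (by omega)]
    exact mul_comm _ _
  · intro _ lam
    rw [e1, Kmat_map]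
    exact Kmat_rank _ _ _ (by omega) _
  · intro _ lam
    rw [e3, Kmat_map]
    exact Kmat_rank _ _ _ rfl _
  · intro lam
    rw [e2, Dmat_map]
    apply Dmat_rank _ _ _ (k-μ-1) (by omega)
    have h2 : k - 1 - (k-μ-1) = μ := by omega
    simp [h2, nij_one x (μ+1) μ (by omega)]
  · intro lam
    rw [e4, Dmat_map]
    apply Dmat_rank _ _ _ μ (by omega)
    simp [Nat.sub_self, nij_one x 1 0 (by omega)]
end
end

section
/- D_2^N(λ)·M_μ^N(λ)·D_1^N(λ)^T = P(λ) identically in λ, where D_1^N(λ) and D_2^N(λ) denote the block rows whose transposes are the block columns D_1^N(λ)^T and D_2^N(λ)^T. -/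
open Polynomial Matrix

noncomputable section

/-- The matrix polynomial `P(λ) = Σ_{i=0}^{k} P_i n_i(λ)` in the Newton basis. -/
def PmatN (k m n : ℕ) (x : ℕ → ℂ) (P : ℕ → Matrix (Fin m) (Fin n) ℂ) :
    Matrix (Fin m) (Fin n) (Polynomial ℂ) :=
  ∑ i ∈ Finset.range (k + 1), nij x 1 i • (P i).map C

/-- The body `M_μ^N(λ)`: `(μ+1) × (k-μ)` block matrix with `(1,1)` block
`γ_k(λ)P_k + P_{k-1}`, `(1,j)` block `P_{k-j}` for `2 ≤ j ≤ k-μ`, `(i,k-μ)` block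
`P_{μ+1-i}` for `2 ≤ i ≤ μ+1`, and zero blocks elsewhere (1-based block indices). -/
def MmuN (k μ m n : ℕ) (x : ℕ → ℂ) (P : ℕ → Matrix (Fin m) (Fin n) ℂ) :
    Matrix (Fin (μ + 1) × Fin m) (Fin (k - μ) × Fin n) (Polynomial ℂ) :=
  Matrix.of fun p q =>
    if (p.1 : ℕ) = 0 ∧ (q.1 : ℕ) = 0 then
      gam x k * C (P k p.2 q.2) + C (P (k - 1) p.2 q.2)
    else if (p.1 : ℕ) = 0 then C (P (k - 1 - (q.1 : ℕ)) p.2 q.2)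
    else if (q.1 : ℕ) = k - μ - 1 then C (P (μ - (p.1 : ℕ)) p.2 q.2)
    else 0

/-- The colleague Newton pencil `N_P^μ(λ) = [[M_μ^N(λ), K_2^N(λ)^T], [K_1^N(λ), 0]]`. -/
def NPmu (k μ m n : ℕ) (x : ℕ → ℂ) (P : ℕ → Matrix (Fin m) (Fin n) ℂ) :
    Matrix ((Fin (μ + 1) × Fin m) ⊕ (Fin (k - μ - 1) × Fin n))
      ((Fin (k - μ) × Fin n) ⊕ (Fin μ × Fin m)) (Polynomial ℂ) :=
  Matrix.fromBlocks (MmuN k μ m n x P) (K2N μ m x).transpose (K1N k μ n x) 0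

lemma nij_lt (x : ℕ → ℂ) {i j : ℕ} (h : j < i) : nij x i j = 1 := by
  unfold nij; rw [Finset.Icc_eq_empty (by omega), Finset.prod_empty]

lemma nij_mul (x : ℕ → ℂ) {a b : ℕ} (h : a ≤ b) :
    nij x 1 a * nij x (a + 1) b = nij x 1 b := by
  unfold nij
  rw [Finset.Icc_add_one_left_eq_Ioc, show (1:ℕ) = 0 + 1 by rfl, Finset.Icc_add_one_left_eq_Ioc, Finset.Icc_add_one_left_eq_Ioc]
  exact Finset.prod_Ioc_consecutive _ (Nat.zero_le a) h

lemma nij_succ_top (x : ℕ → ℂ) (b : ℕ) :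
    nij x 1 (b + 1) = nij x 1 b * gam x (b + 1) := by
  unfold nij; exact Finset.prod_Icc_succ_top (by omega) _

lemma newton_key (k μ : ℕ) (hk : 2 ≤ k) (hμ : μ ≤ k - 1) (x : ℕ → ℂ) (c : ℕ → Polynomial ℂ) :
    ∑ j ∈ Finset.range (k - μ),
      (∑ i ∈ Finset.range (μ + 1),
          if i = 0 ∧ j = 0 then nij x 1 (μ - i) * (gam x k * c k + c (k - 1))
          else if i = 0 then nij x 1 (μ - i) * c (k - 1 - j)
          else if j = k - μ - 1 then nij x 1 (μ - i) * c (μ - i) else 0) *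
        nij x (μ + 1) (k - 1 - j)
    = ∑ i ∈ Finset.range (k + 1), nij x 1 i * c i := by
  have hμk : μ + 1 ≤ k := by omega
  have hw : ∀ j ∈ Finset.range (k - μ),
      (∑ i ∈ Finset.range (μ + 1),
          if i = 0 ∧ j = 0 then nij x 1 (μ - i) * (gam x k * c k + c (k - 1))
          else if i = 0 then nij x 1 (μ - i) * c (k - 1 - j)
          else if j = k - μ - 1 then nij x 1 (μ - i) * c (μ - i) else 0) *
        nij x (μ + 1) (k - 1 - j)
      = (if j = 0 then nij x 1 μ * (gam x k * c k + c (k - 1)) * nij x (μ + 1) (k - 1)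
          else nij x 1 μ * c (k - 1 - j) * nij x (μ + 1) (k - 1 - j))
        + (if j = k - μ - 1 then ∑ i ∈ Finset.range μ, nij x 1 (μ - (i + 1)) * c (μ - (i + 1))
          else 0) := by
    intro j hj
    rw [Finset.sum_range_succ']
    simp only [Nat.succ_ne_zero, if_false, Nat.add_eq_zero, one_ne_zero, false_and, and_false,
      Nat.sub_zero, true_and, if_true, Finset.sum_ite_irrel, Finset.sum_const_zero]
    rw [add_mul, add_comm]
    congr 1
    · split_ifs with h
      · subst h; rw [Nat.sub_zero]
      · rfl
    · split_ifs with h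
      · subst h
        rw [show k - 1 - (k - μ - 1) = μ by omega, nij_lt x (by omega), mul_one]
      · rw [zero_mul]
  rw [Finset.sum_congr rfl hw, Finset.sum_add_distrib]
  -- Piece 2
  rw [Finset.sum_ite_eq' (Finset.range (k - μ)) (k - μ - 1)
    (fun _ => ∑ i ∈ Finset.range μ, nij x 1 (μ - (i + 1)) * c (μ - (i + 1))),
    if_pos (Finset.mem_range.mpr (by omega))]
  have hS : (∑ i ∈ Finset.range μ, nij x 1 (μ - (i + 1)) * c (μ - (i + 1)))
      = ∑ i ∈ Finset.range μ, nij x 1 i * c i := by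
    rw [← Finset.sum_range_reflect (fun i => nij x 1 i * c i) μ]
    exact Finset.sum_congr rfl fun i hi => by rw [show μ - (i + 1) = μ - 1 - i from by omega]
  rw [hS]
  -- Piece 1
  rw [show k - μ = (k - μ - 1) + 1 from by omega, Finset.sum_range_succ']
  simp only [Nat.succ_ne_zero, if_false, if_true, eq_self_iff_true]
  have hT0 : nij x 1 μ * (gam x k * c k + c (k - 1)) * nij x (μ + 1) (k - 1)
      = nij x 1 k * c k + nij x 1 (k - 1) * c (k - 1) := by
    have h1 := nij_mul x (show μ ≤ k - 1 from hμ)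
    have h2 : nij x 1 k = nij x 1 (k - 1) * gam x k := by
      have h3 := nij_succ_top x (k - 1)
      rwa [show k - 1 + 1 = k from by omega] at h3
    linear_combination (gam x k * c k + c (k - 1)) * h1 - c k * h2
  rw [hT0]
  have hmid : (∑ j ∈ Finset.range (k - μ - 1),
        nij x 1 μ * c (k - 1 - (j + 1)) * nij x (μ + 1) (k - 1 - (j + 1)))
      = ∑ j ∈ Finset.range (k - μ - 1), nij x 1 (μ + j) * c (μ + j) := by
    rw [← Finset.sum_range_reflect (fun j => nij x 1 (μ + j) * c (μ + j)) (k - μ - 1)]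
    refine Finset.sum_congr rfl fun j hj => ?_
    simp only [Finset.mem_range] at hj
    rw [show μ + (k - μ - 1 - 1 - j) = k - 1 - (j + 1) from by omega]
    linear_combination c (k - 1 - (j + 1)) * nij_mul x (show μ ≤ k - 1 - (j + 1) from by omega)
  rw [hmid]
  -- RHS decomposition
  rw [show k + 1 = μ + (k - μ - 1) + 1 + 1 from by omega, Finset.sum_range_succ,
    Finset.sum_range_succ, Finset.sum_range_add,
    show μ + (k - μ - 1) + 1 = k from by omega, show μ + (k - μ - 1) = k - 1 from by omega]
  ring

/-- `D_2^N(λ) M_μ^N(λ) D_1^N(λ)^T = P(λ)` identically in `λ`. -/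
theorem newton_body_product
    (k μ m n : ℕ) (hk : 2 ≤ k) (hμ : μ ≤ k - 1) (hm : 0 < m) (hn : 0 < n)
    (x : ℕ → ℂ)
    (hx : ∀ i j : ℕ, 1 ≤ i → i ≤ k → 1 ≤ j → j ≤ k → x i = x j → i = j)
    (P : ℕ → Matrix (Fin m) (Fin n) ℂ) :
    (D2NT μ m x).transpose * MmuN k μ m n x P * D1NT k μ n x = PmatN k m n x P := by
  apply Matrix.ext; intro s t
  simp only [Matrix.mul_apply, Matrix.transpose_apply, D2NT, D1NT, MmuN, PmatN, Matrix.of_apply,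
    Fintype.sum_prod_type, mul_ite, ite_mul, mul_one, mul_zero, zero_mul, one_mul,
    Finset.sum_ite_irrel, Finset.sum_const_zero, Finset.sum_ite_eq, Finset.sum_ite_eq',
    Finset.mem_univ, if_true, Matrix.sum_apply, Matrix.smul_apply, Matrix.map_apply, smul_eq_mul]
  rw [Fin.sum_univ_eq_sum_range (fun j =>
    (∑ i : Fin (μ + 1),
        if (i : ℕ) = 0 ∧ j = 0 then nij x 1 (μ - (i:ℕ)) * (gam x k * C (P k s t) + C (P (k - 1) s t))
        else if (i : ℕ) = 0 then nij x 1 (μ - (i:ℕ)) * C (P (k - 1 - j) s t)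
        else if j = k - μ - 1 then nij x 1 (μ - (i:ℕ)) * C (P (μ - (i:ℕ)) s t) else 0) *
      nij x (μ + 1) (k - 1 - j)) (k - μ)]
  have hin : ∀ j : ℕ, (∑ i : Fin (μ + 1),
        if (i : ℕ) = 0 ∧ j = 0 then nij x 1 (μ - (i:ℕ)) * (gam x k * C (P k s t) + C (P (k - 1) s t))
        else if (i : ℕ) = 0 then nij x 1 (μ - (i:ℕ)) * C (P (k - 1 - j) s t)
        else if j = k - μ - 1 then nij x 1 (μ - (i:ℕ)) * C (P (μ - (i:ℕ)) s t) else 0)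
      = ∑ i ∈ Finset.range (μ + 1),
        (if i = 0 ∧ j = 0 then nij x 1 (μ - i) * (gam x k * C (P k s t) + C (P (k - 1) s t))
        else if i = 0 then nij x 1 (μ - i) * C (P (k - 1 - j) s t)
        else if j = k - μ - 1 then nij x 1 (μ - i) * C (P (μ - i) s t) else 0) := fun j =>
    Fin.sum_univ_eq_sum_range (fun i =>
        if i = 0 ∧ j = 0 then nij x 1 (μ - i) * (gam x k * C (P k s t) + C (P (k - 1) s t))
        else if i = 0 then nij x 1 (μ - i) * C (P (k - 1 - j) s t)
        else if j = k - μ - 1 then nij x 1 (μ - i) * C (P (μ - i) s t) else 0) (μ + 1)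
  simp only [hin]
  exact newton_key k μ hk hμ x (fun i => C (P i s t))
end
end

section
/- Assume 0 ≤ μ ≤ k−1. Then K_1^L(λ)·D_1^L(λ)^T = 0 and K_2^L(λ)·D_2^L(λ)^T = 0 identically in λ; moreover, for every λ_0 ∈ ℂ, the evaluated matrices K_1^L(λ_0) and K_2^L(λ_0) have full row rank and D_1^L(λ_0)^T and D_2^L(λ_0)^T have full column rank (whenever the corresponding matrix is nonempty, i.e. μ ≤ k−2 for K_1^L and μ ≥ 1 for K_2^L). -/
open Polynomial Matrix

noncomputable section

/-- The barycentric weight `w_i = 1 / ∏_{j ≠ i, 1 ≤ j ≤ k+1} (x_i - x_j)`. -/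
def wbar (k : ℕ) (x : ℕ → ℂ) (i : ℕ) : ℂ :=
  (∏ j ∈ (Finset.Icc 1 (k + 1)).erase i, (x i - x j))⁻¹

/-- The matrix pencil `K_1^L(λ)`: `(k-μ-1) × (k-μ)` block matrix with `n × n` blocks,
`(i,i)` block `γ_{k+2-i}(λ) I_n`, `(i,i+1)` block `-γ_{k-i}(λ) I_n` (1-based). -/
def K1L (k μ n : ℕ) (x : ℕ → ℂ) :
    Matrix (Fin (k - μ - 1) × Fin n) (Fin (k - μ) × Fin n) (Polynomial ℂ) :=
  Matrix.of fun p q =>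
    (if (q.1 : ℕ) = (p.1 : ℕ) then gam x (k + 1 - (p.1 : ℕ))
      else if (q.1 : ℕ) = (p.1 : ℕ) + 1 then -gam x (k - 1 - (p.1 : ℕ)) else 0) *
    (if p.2 = q.2 then 1 else 0)

/-- The matrix pencil `K_2^L(λ)`: `μ × (μ+1)` block matrix with `m × m` blocks,
`(i,i)` block `γ_{μ+3-i}(λ) I_m`, `(i,i+1)` block `-γ_{μ+1-i}(λ) I_m` (1-based). -/
def K2L (μ m : ℕ) (x : ℕ → ℂ) :
    Matrix (Fin μ × Fin m) (Fin (μ + 1) × Fin m) (Polynomial ℂ) :=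
  Matrix.of fun p q =>
    (if (q.1 : ℕ) = (p.1 : ℕ) then gam x (μ + 2 - (p.1 : ℕ))
      else if (q.1 : ℕ) = (p.1 : ℕ) + 1 then -gam x (μ - (p.1 : ℕ)) else 0) *
    (if p.2 = q.2 then 1 else 0)

/-- `D_1^L(λ)^T`: block column with `k-μ` blocks whose `i`-th block (1-based) is
`(n_{μ+1}^{k+1}(λ)/(γ_{k+2-i}(λ)γ_{k+1-i}(λ))) I_n`, the quotient being the product of
the factors `γ_ℓ`, `μ+1 ≤ ℓ ≤ k+1`, with the two indicated factors deleted. -/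
def D1LT (k μ n : ℕ) (x : ℕ → ℂ) :
    Matrix (Fin (k - μ) × Fin n) (Fin n) (Polynomial ℂ) :=
  Matrix.of fun p t =>
    (∏ l ∈ ((Finset.Icc (μ + 1) (k + 1)).erase (k + 1 - (p.1 : ℕ))).erase (k - (p.1 : ℕ)),
        gam x l) *
    (if p.2 = t then 1 else 0)

/-- `D_2^L(λ)^T`: block column with `μ+1` blocks whose `i`-th block (1-based) is
`(n_1^{μ+2}(λ)/(γ_{μ+3-i}(λ)γ_{μ+2-i}(λ))) I_m`. -/
def D2LT (μ m : ℕ) (x : ℕ → ℂ) :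
    Matrix (Fin (μ + 1) × Fin m) (Fin m) (Polynomial ℂ) :=
  Matrix.of fun p t =>
    (∏ l ∈ ((Finset.Icc 1 (μ + 2)).erase (μ + 2 - (p.1 : ℕ))).erase (μ + 1 - (p.1 : ℕ)),
        gam x l) *
    (if p.2 = t then 1 else 0)

/-- The Lagrange interpolation matrix polynomial
`P(λ) = Σ_{i=1}^{k+1} w_i P_i ∏_{j ≠ i} (λ - x_j)`. -/
def PmatL (k m n : ℕ) (x : ℕ → ℂ) (P : ℕ → Matrix (Fin m) (Fin n) ℂ) :
    Matrix (Fin m) (Fin n) (Polynomial ℂ) :=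
  ∑ i ∈ Finset.Icc 1 (k + 1),
    (C (wbar k x i) * ∏ j ∈ (Finset.Icc 1 (k + 1)).erase i, gam x j) • (P i).map C

/-- The body `M_μ^L(λ)`: `(μ+1) × (k-μ)` block matrix with `(1,1)` block
`w_{k+1}γ_k(λ)P_{k+1} + w_kγ_{k+1}(λ)P_k`, `(1,j)` block `w_{k+1-j}γ_{k+2-j}(λ)P_{k+1-j}`
for `2 ≤ j ≤ k-μ`, `(i,k-μ)` block `w_{μ+2-i}γ_{μ+3-i}(λ)P_{μ+2-i}` for `2 ≤ i ≤ μ+1`,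
and zero blocks elsewhere (1-based block indices). -/
def MmuL (k μ m n : ℕ) (x : ℕ → ℂ) (P : ℕ → Matrix (Fin m) (Fin n) ℂ) :
    Matrix (Fin (μ + 1) × Fin m) (Fin (k - μ) × Fin n) (Polynomial ℂ) :=
  Matrix.of fun p q =>
    if (p.1 : ℕ) = 0 ∧ (q.1 : ℕ) = 0 then
      C (wbar k x (k + 1)) * gam x k * C (P (k + 1) p.2 q.2) +
        C (wbar k x k) * gam x (k + 1) * C (P k p.2 q.2)
    else if (p.1 : ℕ) = 0 then
      C (wbar k x (k - (q.1 : ℕ))) * gam x (k + 1 - (q.1 : ℕ)) * C (P (k - (q.1 : ℕ)) p.2 q.2)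
    else if (q.1 : ℕ) = k - μ - 1 then
      C (wbar k x (μ + 1 - (p.1 : ℕ))) * gam x (μ + 2 - (p.1 : ℕ)) *
        C (P (μ + 1 - (p.1 : ℕ)) p.2 q.2)
    else 0

/-- The colleague Lagrange pencil `L_P^μ(λ) = [[M_μ^L(λ), K_2^L(λ)^T], [K_1^L(λ), 0]]`. -/
def LPmu (k μ m n : ℕ) (x : ℕ → ℂ) (P : ℕ → Matrix (Fin m) (Fin n) ℂ) :
    Matrix ((Fin (μ + 1) × Fin m) ⊕ (Fin (k - μ - 1) × Fin n))
      ((Fin (k - μ) × Fin n) ⊕ (Fin μ × Fin m)) (Polynomial ℂ) :=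
  Matrix.fromBlocks (MmuL k μ m n x P) (K2L μ m x).transpose (K1L k μ n x) 0

/-!
Both `K`-pencils are Kronecker products `B ⊗ I` of a scalar bidiagonal matrix `B` whose row `i`
carries `γ_{N-i}` on the diagonal and `-γ_{N-2-i}` just right of it, and both `D`'s are `v ⊗ I`
for the column `v` of cofactors `v_i = n_L^N / (γ_{N-i} γ_{N-1-i})`. Row `i` of `B v` telescopes:
both of its terms are `± n_L^N / γ_{N-1-i}`.

At a point `λ₀` at most one factor `γ_l(λ₀)` vanishes, because the nodes are distinct. Hence some
cofactor `v_i(λ₀)` is nonzero, and in `B(λ₀)` no zero diagonal entry lies in a row at or above a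
row with zero superdiagonal entry (that would force `x_{N-i} = x_{N-2-i'}` with `i ≤ i'`). This
makes the rows of `B(λ₀)` independent: a left null vector vanishes from the top down as long as
the diagonal entries are nonzero, and from the bottom up as long as the superdiagonal ones are.
-/

open scoped Kronecker

theorem Finset.mul_prod_erase_erase {α M : Type*} [DecidableEq α] [CommMonoid M]
    (s : Finset α) (f : α → M) {a b : α} (ha : a ∈ s) (hab : a ≠ b) :
    f a * ∏ l ∈ (s.erase a).erase b, f l = ∏ l ∈ s.erase b, f l := by
  rw [Finset.erase_right_comm, Finset.mul_prod_erase _ _ (Finset.mem_erase.mpr ⟨hab, ha⟩)]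

namespace Matrix

variable {R K : Type*} {ι κ n : Type*} [DecidableEq n]

def blockCol (n : Type*) [DecidableEq n] [Zero R] [One R] [Mul R] (v : ι → R) :
    Matrix (ι × n) n R :=
  of fun p t => v p.1 * (1 : Matrix n n R) p.2 t

@[simp]
theorem blockCol_zero [MulZeroOneClass R] : blockCol n (0 : ι → R) = 0 := by
  ext; simp [blockCol]

theorem kronecker_one_mul_blockCol [CommSemiring R] [Fintype κ] [Fintype n]
    (A : Matrix ι κ R) (v : κ → R) :
    (A ⊗ₖ (1 : Matrix n n R)) * blockCol n v = blockCol n (A *ᵥ v) := by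
  ext ⟨i, s⟩ t
  simp [mul_apply, blockCol, one_apply, Fintype.sum_prod_type, mulVec, dotProduct]

theorem map_blockCol {S : Type*} [Semiring R] [Semiring S] (f : R →+* S) (v : ι → R) :
    (blockCol n v).map f = blockCol n (f ∘ v) := by
  ext; simp [blockCol, one_apply, apply_ite f]

theorem map_kronecker_one {S : Type*} [Semiring R] [Semiring S] (f : R →+* S)
    (A : Matrix ι κ R) :
    (A ⊗ₖ (1 : Matrix n n R)).map f = A.map f ⊗ₖ (1 : Matrix n n S) := by
  ext; simp [one_apply, apply_ite f]

theorem linearIndependent_row_of_vecMul_eq_zero [Ring R] [Fintype ι] {M : Matrix ι κ R}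
    (h : ∀ y, y ᵥ* M = 0 → y = 0) : LinearIndependent R M.row :=
  vecMul_injective_iff.mp ((injective_iff_map_eq_zero M.vecMulLinear).mpr h)

theorem linearIndependent_row_kronecker_one [Field K] [Fintype ι] [Fintype n]
    {A : Matrix ι κ K} (hA : LinearIndependent K A.row) :
    LinearIndependent K (A ⊗ₖ (1 : Matrix n n K)).row := by
  refine linearIndependent_row_of_vecMul_eq_zero fun y hy => ?_
  have hcol (t : n) : (fun i => y (i, t)) ᵥ* A = 0 ᵥ* A := by
    ext j
    simpa [vecMul, dotProduct, kronecker_apply, one_apply, Fintype.sum_prod_type] using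
      congrFun hy (j, t)
  ext ⟨i, t⟩
  exact congrFun (vecMul_injective_iff.mpr hA (hcol t)) i

theorem rank_blockCol [Field K] [Fintype ι] [Fintype n] {v : ι → K} (hv : v ≠ 0) :
    (blockCol n v).rank = Fintype.card n := by
  obtain ⟨i, hi⟩ := Function.ne_iff.mp hv
  have hrow : LinearIndependent K (blockCol n v)ᵀ.row := by
    refine linearIndependent_row_of_vecMul_eq_zero fun z hz => ?_
    ext t
    have : z t = 0 ∨ v i = 0 := by
      simpa [vecMul, dotProduct, blockCol, one_apply] using congrFun hz (i, t)
    exact this.resolve_right hi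
  rw [← rank_transpose, hrow.rank_matrix]

def bidiag [Zero R] (r s : ℕ) (a c : ℕ → R) : Matrix (Fin r) (Fin s) R :=
  of fun i j => if (j : ℕ) = i then a i else if (j : ℕ) = i + 1 then c i else 0

theorem map_bidiag {S : Type*} [Semiring R] [Semiring S] (f : R →+* S) (r s : ℕ)
    (a c : ℕ → R) : (bidiag r s a c).map f = bidiag r s (f ∘ a) (f ∘ c) := by
  ext; simp [bidiag, apply_ite f]

theorem bidiag_mulVec [Semiring R] {r s : ℕ} (hrs : r < s) (a c v : ℕ → R) (i : Fin r) :
    (bidiag r s a c *ᵥ fun j => v j) i = a i * v i + c i * v (i + 1) := by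
  have hi : (i : ℕ) + 1 < s := by omega
  simp only [mulVec, dotProduct, bidiag, of_apply, ite_mul, zero_mul]
  rw [Fin.sum_univ_eq_sum_range (fun j => if j = (i : ℕ) then a i * v j
    else if j = (i : ℕ) + 1 then c i * v j else 0) s]
  simp [Finset.sum_ite, Finset.filter_eq', Finset.filter_ne', hi, hrs.trans' i.2]

theorem vecMul_bidiag_zero [Semiring R] {r s : ℕ} (hs : 0 < s) (a c y : ℕ → R)
    (hy : ∀ i, r ≤ i → y i = 0) :
    ((fun i : Fin r => y i) ᵥ* bidiag r s a c) ⟨0, hs⟩ = y 0 * a 0 := by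
  simp only [vecMul, dotProduct, bidiag, of_apply]
  rw [Fin.sum_univ_eq_sum_range
    (fun i => y i * if 0 = i then a i else if 0 = i + 1 then c i else 0) r]
  rcases Nat.eq_zero_or_pos r with rfl | hr
  · simp [hy]
  · simp [hr]

theorem vecMul_bidiag_succ [Semiring R] {r s : ℕ} (a c y : ℕ → R)
    (hy : ∀ i, r ≤ i → y i = 0) (j : ℕ) (hj : j + 1 < s) :
    ((fun i : Fin r => y i) ᵥ* bidiag r s a c) ⟨j + 1, hj⟩ =
      y j * c j + y (j + 1) * a (j + 1) := by
  simp only [vecMul, dotProduct, bidiag, of_apply]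
  rw [Fin.sum_univ_eq_sum_range
    (fun i => y i * if j + 1 = i then a i else if j + 1 = i + 1 then c i else 0) r]
  have hsplit (i : ℕ) : (y i * if j + 1 = i then a i else if j + 1 = i + 1 then c i else 0) =
      (if i = j + 1 then y i * a i else 0) + (if i = j then y i * c i else 0) := by
    split_ifs <;> first | omega | simp
  simp only [hsplit, Finset.sum_add_distrib, Finset.sum_ite_eq', Finset.mem_range]
  split_ifs with h₁ h₂ h₂
  · exact add_comm _ _
  · omega
  · rw [hy (j + 1) (by omega), zero_mul, add_zero, zero_add]
  · rw [hy j (by omega), hy (j + 1) (by omega), zero_mul, zero_mul, add_zero]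

theorem linearIndependent_row_bidiag [Field K] {r s : ℕ} (hrs : r < s) {a c : ℕ → K}
    (hac : ∀ i i', i ≤ i' → i' < r → a i = 0 → c i' ≠ 0) :
    LinearIndependent K (bidiag r s a c).row := by
  refine linearIndependent_row_of_vecMul_eq_zero fun z hz => ?_
  let y : ℕ → K := fun i => if h : i < r then z ⟨i, h⟩ else 0
  have hy : ∀ i, r ≤ i → y i = 0 := fun i hi => dif_neg (by omega)
  have hzy : z = fun i : Fin r => y i := funext fun i => by simp [y]
  rw [hzy] at hz ⊢
  have col_zero : y 0 * a 0 = 0 := by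
    rw [← vecMul_bidiag_zero (r.zero_le.trans_lt hrs) a c y hy, hz, Pi.zero_apply]
  have col_succ (i : ℕ) (hi : i < r) : y i * c i + y (i + 1) * a (i + 1) = 0 := by
    rw [← vecMul_bidiag_succ a c y hy i (by omega : i + 1 < s), hz, Pi.zero_apply]
  have forward (i : ℕ) (ha : ∀ i' ≤ i, a i' ≠ 0) : y i = 0 := by
    induction i with
    | zero => exact (mul_eq_zero.mp col_zero).resolve_right (ha 0 le_rfl)
    | succ i ih =>
      by_cases hi : i < r
      · have h := col_succ i hi
        rw [ih fun i' hi' => ha i' (by omega), zero_mul, zero_add] at h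
        exact (mul_eq_zero.mp h).resolve_right (ha _ le_rfl)
      · exact hy _ (by omega)
  have backward (d i : ℕ) (hd : r ≤ i + d) (hc : ∀ i', i ≤ i' → i' < r → c i' ≠ 0) :
      y i = 0 := by
    induction d generalizing i with
    | zero => exact hy i hd
    | succ d ih =>
      by_cases hi : i < r
      · have h := col_succ i hi
        rw [ih (i + 1) (by omega) fun i' hi' => hc i' (by omega), zero_mul, add_zero] at h
        exact (mul_eq_zero.mp h).resolve_right (hc i le_rfl hi)
      · exact hy i (by omega)
  ext ⟨i, hi⟩
  by_cases ha : ∀ i' ≤ i, a i' ≠ 0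
  · exact forward i ha
  · push Not at ha
    obtain ⟨i₀, hi₀, ha₀⟩ := ha
    exact backward r i (by omega) fun i' hii' hi' => hac i₀ i' (by omega) hi' ha₀

end Matrix

section LagrangePencils

variable (x : ℕ → ℂ)

def nodeBidiag (r s N : ℕ) : Matrix (Fin r) (Fin s) ℂ[X] :=
  bidiag r s (fun i => gam x (N - i)) (fun i => -gam x (N - 2 - i))

-- `n_L^N(λ) / (γ_{N-i}(λ) γ_{N-1-i}(λ))`
def nodeCofactor (L N i : ℕ) : ℂ[X] :=
  ∏ l ∈ ((Finset.Icc L N).erase (N - i)).erase (N - 1 - i), gam x l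

theorem K1L_eq_kronecker (k μ n : ℕ) :
    K1L k μ n x = nodeBidiag x (k - μ - 1) (k - μ) (k + 1) ⊗ₖ 1 := rfl

theorem K2L_eq_kronecker (μ m : ℕ) :
    K2L μ m x = nodeBidiag x μ (μ + 1) (μ + 2) ⊗ₖ 1 := rfl

theorem D1LT_eq_blockCol (k μ n : ℕ) :
    D1LT k μ n x = blockCol (Fin n) fun i : Fin (k - μ) => nodeCofactor x (μ + 1) (k + 1) i :=
  rfl

theorem D2LT_eq_blockCol (μ m : ℕ) :
    D2LT μ m x = blockCol (Fin m) fun i : Fin (μ + 1) => nodeCofactor x 1 (μ + 2) i := rfl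

theorem nodeBidiag_mulVec_nodeCofactor {r s L N : ℕ} (hrs : r < s) (hLN : L + r + 1 ≤ N) :
    nodeBidiag x r s N *ᵥ (fun j : Fin s => nodeCofactor x L N j) = 0 := by
  ext i
  have hi := i.2
  have hsucc : nodeCofactor x L N (i + 1) =
      ∏ l ∈ ((Finset.Icc L N).erase (N - 1 - i)).erase (N - 2 - i), gam x l := by
    rw [nodeCofactor, show N - (i + 1) = N - 1 - i by omega,
      show N - 1 - (i + 1) = N - 2 - i by omega]
  rw [nodeBidiag, bidiag_mulVec hrs, hsucc, nodeCofactor, neg_mul,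
    Finset.mul_prod_erase_erase _ _ (Finset.mem_Icc.mpr ⟨by omega, by omega⟩) (by omega),
    Finset.mul_prod_erase _ _
      (Finset.mem_erase.mpr ⟨by omega, Finset.mem_Icc.mpr ⟨by omega, by omega⟩⟩),
    add_neg_cancel, Pi.zero_apply]

theorem linearIndependent_row_map_eval_nodeBidiag {L N : ℕ} (hx : Set.InjOn x (Set.Icc L N))
    {r s : ℕ} (hrs : r < s) (hLN : L + r + 1 ≤ N) (lam : ℂ) :
    LinearIndependent ℂ ((nodeBidiag x r s N).map (eval lam)).row := by
  rw [nodeBidiag, ← coe_evalRingHom, map_bidiag]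
  refine linearIndependent_row_bidiag hrs fun i i' hii' hi' ha hc => ?_
  simp only [Function.comp_apply, gam, coe_evalRingHom, eval_neg, eval_sub, eval_X, eval_C,
    neg_eq_zero, sub_eq_zero] at ha hc
  have := hx (Set.mem_Icc.mpr ⟨by omega, by omega⟩ : N - i ∈ Set.Icc L N)
    (Set.mem_Icc.mpr ⟨by omega, by omega⟩ : N - 2 - i' ∈ Set.Icc L N) (ha.symm.trans hc)
  omega

theorem exists_eval_nodeCofactor_ne_zero {L N : ℕ} (hx : Set.InjOn x (Set.Icc L N))
    (hLN : L < N) (lam : ℂ) : ∃ i < N - L, (nodeCofactor x L N i).eval lam ≠ 0 := by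
  simp only [nodeCofactor, eval_prod, gam, eval_sub, eval_X, eval_C, Finset.prod_ne_zero_iff,
    sub_ne_zero]
  by_cases hlam : ∃ l ∈ Set.Icc L N, lam = x l
  · obtain ⟨l, hl, rfl⟩ := hlam
    refine ⟨min (N - l) (N - L - 1), by omega, fun l' hl' hxl => ?_⟩
    simp only [Finset.mem_erase, Finset.mem_Icc] at hl'
    have := hx hl (Set.mem_Icc.mpr hl'.2.2) hxl
    omega
  · push Not at hlam
    refine ⟨0, by omega, fun l hl => hlam l ?_⟩
    simpa using Finset.mem_of_mem_erase (Finset.mem_of_mem_erase hl)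

theorem rank_map_eval_nodeBidiag_kronecker_one {L N : ℕ} (hx : Set.InjOn x (Set.Icc L N))
    {r s : ℕ} (hrs : r < s) (hLN : L + r + 1 ≤ N) (n : ℕ) (lam : ℂ) :
    ((nodeBidiag x r s N ⊗ₖ (1 : Matrix (Fin n) (Fin n) ℂ[X])).map (eval lam)).rank =
      r * n := by
  rw [← coe_evalRingHom, map_kronecker_one]
  exact (linearIndependent_row_kronecker_one
    (linearIndependent_row_map_eval_nodeBidiag x hx hrs hLN lam)).rank_matrix.trans (by simp)

theorem rank_map_eval_blockCol_nodeCofactor {L N b : ℕ} (hx : Set.InjOn x (Set.Icc L N))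
    (hbN : L + b = N) (hb : 0 < b) (n : ℕ) (lam : ℂ) :
    ((blockCol (Fin n) fun i : Fin b => nodeCofactor x L N i).map (eval lam)).rank = n := by
  obtain ⟨i, hi, hne⟩ := exists_eval_nodeCofactor_ne_zero x hx (by omega) lam
  rw [← coe_evalRingHom, map_blockCol, rank_blockCol, Fintype.card_fin]
  exact Function.ne_iff.mpr ⟨⟨i, by omega⟩, hne⟩

end LagrangePencils

theorem lagrange_dual_minimal_bases_general
    (k μ m n : ℕ) (hk : 2 ≤ k) (hμ : μ ≤ k - 1)
    (x : ℕ → ℂ)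
    (hx : ∀ i j : ℕ, 1 ≤ i → i ≤ k + 1 → 1 ≤ j → j ≤ k + 1 → x i = x j → i = j) :
    K1L k μ n x * D1LT k μ n x = 0 ∧
    K2L μ m x * D2LT μ m x = 0 ∧
    (μ ≤ k - 2 → ∀ lam : ℂ, ((K1L k μ n x).map (eval lam)).rank = (k - μ - 1) * n) ∧
    (1 ≤ μ → ∀ lam : ℂ, ((K2L μ m x).map (eval lam)).rank = μ * m) ∧
    (∀ lam : ℂ, ((D1LT k μ n x).map (eval lam)).rank = n) ∧
    (∀ lam : ℂ, ((D2LT μ m x).map (eval lam)).rank = m) := by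
  have hinj : Set.InjOn x (Set.Icc 1 (k + 1)) := fun i hi j hj => hx i j hi.1 hi.2 hj.1 hj.2
  have hinj₁ : Set.InjOn x (Set.Icc (μ + 1) (k + 1)) :=
    hinj.mono (Set.Icc_subset_Icc (by omega) le_rfl)
  have hinj₂ : Set.InjOn x (Set.Icc 1 (μ + 2)) :=
    hinj.mono (Set.Icc_subset_Icc le_rfl (by omega))
  refine ⟨?_, ?_, fun _ lam => ?_, fun _ lam => ?_, fun lam => ?_, fun lam => ?_⟩
  · rw [K1L_eq_kronecker, D1LT_eq_blockCol, kronecker_one_mul_blockCol,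
      nodeBidiag_mulVec_nodeCofactor x (by omega)
        (by omega : μ + 1 + (k - μ - 1) + 1 ≤ k + 1), blockCol_zero]
  · rw [K2L_eq_kronecker, D2LT_eq_blockCol, kronecker_one_mul_blockCol,
      nodeBidiag_mulVec_nodeCofactor x (by omega) (by omega : 1 + μ + 1 ≤ μ + 2), blockCol_zero]
  · exact rank_map_eval_nodeBidiag_kronecker_one x hinj₁ (by omega) (by omega) n lam
  · exact rank_map_eval_nodeBidiag_kronecker_one x hinj₂ (by omega) (by omega) m lam
  · exact rank_map_eval_blockCol_nodeCofactor x hinj₁ (by omega) (by omega) n lam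
  · exact rank_map_eval_blockCol_nodeCofactor x hinj₂ (by omega) (by omega) m lam

/-- Duality and minimality for the Lagrange pencils: `K_1^L(λ) D_1^L(λ)^T = 0`,
`K_2^L(λ) D_2^L(λ)^T = 0`, and for every `λ_0 ∈ ℂ` the evaluations of `K_1^L`, `K_2^L`
have full row rank (when nonempty) and those of `D_1^L(λ)^T`, `D_2^L(λ)^T` have full
column rank. -/
theorem lagrange_dual_minimal_bases
    (k μ m n : ℕ) (hk : 2 ≤ k) (hμ : μ ≤ k - 1) (hm : 0 < m) (hn : 0 < n)
    (x : ℕ → ℂ)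
    (hx : ∀ i j : ℕ, 1 ≤ i → i ≤ k + 1 → 1 ≤ j → j ≤ k + 1 → x i = x j → i = j) :
    K1L k μ n x * D1LT k μ n x = 0 ∧
    K2L μ m x * D2LT μ m x = 0 ∧
    (μ ≤ k - 2 → ∀ lam : ℂ, ((K1L k μ n x).map (eval lam)).rank = (k - μ - 1) * n) ∧
    (1 ≤ μ → ∀ lam : ℂ, ((K2L μ m x).map (eval lam)).rank = μ * m) ∧
    (∀ lam : ℂ, ((D1LT k μ n x).map (eval lam)).rank = n) ∧
    (∀ lam : ℂ, ((D2LT μ m x).map (eval lam)).rank = m) :=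
  lagrange_dual_minimal_bases_general k μ m n hk hμ x hx
end
end

section
/- Assume m = n and that P(λ) is regular, let L(λ) = [[M_μ^L(λ) + A·K_1^L(λ) + K_2^L(λ)^T·B, K_2^L(λ)^T],[K_1^L(λ), 0]] for some A ∈ ℂ^{(μ+1)n×(k−μ−1)n} and B ∈ ℂ^{μn×(k−μ)n}, and let λ_0 ∈ ℂ be a finite eigenvalue of P with λ_0 ∉ {x_1,…,x_{k+1}}. If z is a right eigenvector of L at λ_0, written as a block vector with k blocks of size n, then each of the blocks z(1),…,z(k−μ) is a right eigenvector of P at λ_0; if w is a left eigenvector of L at λ_0, then each of the blocks w(1),…,w(μ+1) is a left eigenvector of P at λ_0. -/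
open Polynomial Matrix

noncomputable section

/-! ### Auxiliary scalar-level definitions and lemmas -/

/-- evaluated `γ` products for `D1LT` blocks -/
def d1v (k μ : ℕ) (x : ℕ → ℂ) (lam0 : ℂ) (q : ℕ) : ℂ :=
  ∏ l ∈ ((Finset.Icc (μ + 1) (k + 1)).erase (k + 1 - q)).erase (k - q), (lam0 - x l)

/-- evaluated `γ` products for `D2LT` blocks -/
def d2v (μ : ℕ) (x : ℕ → ℂ) (lam0 : ℂ) (p : ℕ) : ℂ :=
  ∏ l ∈ ((Finset.Icc 1 (μ + 2)).erase (μ + 2 - p)).erase (μ + 1 - p), (lam0 - x l)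

lemma glue_prod (x : ℕ → ℂ) (lam0 : ℂ) (j : ℕ) (S1 S2 T : Finset ℕ)
    (hd : Disjoint S1 S2) (hj : j ∉ S1 ∪ S2) (hT : insert j (S1 ∪ S2) = T) :
    (lam0 - x j) * ((∏ l ∈ S1, (lam0 - x l)) * ∏ l ∈ S2, (lam0 - x l)) =
      ∏ l ∈ T, (lam0 - x l) := by
  rw [← hT, Finset.prod_insert hj, Finset.prod_union hd]

lemma d1v_rec (k μ : ℕ) (x : ℕ → ℂ) (lam0 : ℂ) (q : ℕ) (hq : q < k - μ - 1) :
    (lam0 - x (k + 1 - q)) * d1v k μ x lam0 q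
      = (lam0 - x (k - 1 - q)) * d1v k μ x lam0 (q + 1) := by
  unfold d1v
  rw [show k + 1 - (q + 1) = k - q from by omega, show k - (q + 1) = k - 1 - q from by omega]
  rw [show ((Finset.Icc (μ + 1) (k + 1)).erase (k + 1 - q)).erase (k - q)
        = ((Finset.Icc (μ + 1) (k + 1)).erase (k - q)).erase (k + 1 - q) from by
      ext l; simp [Finset.mem_erase, Finset.mem_Icc]; omega,
      show ((Finset.Icc (μ + 1) (k + 1)).erase (k - q)).erase (k - 1 - q)
        = ((Finset.Icc (μ + 1) (k + 1)).erase (k - q)).erase (k - 1 - q) from rfl]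
  exact (Finset.mul_prod_erase _ (fun l => lam0 - x l)
      (by simp [Finset.mem_erase, Finset.mem_Icc]; omega :
        k + 1 - q ∈ (Finset.Icc (μ + 1) (k + 1)).erase (k - q))).trans
    (Finset.mul_prod_erase _ (fun l => lam0 - x l)
      (by simp [Finset.mem_erase, Finset.mem_Icc]; omega :
        k - 1 - q ∈ (Finset.Icc (μ + 1) (k + 1)).erase (k - q))).symm

lemma d2v_rec (μ : ℕ) (x : ℕ → ℂ) (lam0 : ℂ) (p : ℕ) (hp : p < μ) :
    (lam0 - x (μ + 2 - p)) * d2v μ x lam0 p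
      = (lam0 - x (μ - p)) * d2v μ x lam0 (p + 1) := by
  unfold d2v
  rw [show μ + 2 - (p + 1) = μ + 1 - p from by omega, show μ + 1 - (p + 1) = μ - p from by omega]
  rw [show ((Finset.Icc 1 (μ + 2)).erase (μ + 2 - p)).erase (μ + 1 - p)
        = ((Finset.Icc 1 (μ + 2)).erase (μ + 1 - p)).erase (μ + 2 - p) from by
      ext l; simp [Finset.mem_erase, Finset.mem_Icc]; omega,
      show ((Finset.Icc 1 (μ + 2)).erase (μ + 1 - p)).erase (μ - p)
        = ((Finset.Icc 1 (μ + 2)).erase (μ + 1 - p)).erase (μ - p) from rfl]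
  exact (Finset.mul_prod_erase _ (fun l => lam0 - x l)
      (by simp [Finset.mem_erase, Finset.mem_Icc]; omega :
        μ + 2 - p ∈ (Finset.Icc 1 (μ + 2)).erase (μ + 1 - p))).trans
    (Finset.mul_prod_erase _ (fun l => lam0 - x l)
      (by simp [Finset.mem_erase, Finset.mem_Icc]; omega :
        μ - p ∈ (Finset.Icc 1 (μ + 2)).erase (μ + 1 - p))).symm


lemma prod_gev_ne_zero (k : ℕ) (x : ℕ → ℂ) (lam0 : ℂ)
    (hnode : ∀ i : ℕ, 1 ≤ i → i ≤ k + 1 → lam0 ≠ x i)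
    (S : Finset ℕ) (h : ∀ l ∈ S, 1 ≤ l ∧ l ≤ k + 1) :
    ∏ l ∈ S, (lam0 - x l) ≠ 0 :=
  Finset.prod_ne_zero_iff.2 fun l hl =>
    sub_ne_zero.2 (hnode l (h l hl).1 (h l hl).2)

lemma d1v_ne_zero (k μ : ℕ) (x : ℕ → ℂ) (lam0 : ℂ)
    (hnode : ∀ i : ℕ, 1 ≤ i → i ≤ k + 1 → lam0 ≠ x i) (q : ℕ) :
    d1v k μ x lam0 q ≠ 0 := by
  refine prod_gev_ne_zero k x lam0 hnode _ fun l hl => ?_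
  simp only [Finset.mem_erase, Finset.mem_Icc] at hl
  omega

lemma d2v_ne_zero (k μ : ℕ) (hμ : μ ≤ k - 1) (hk : 2 ≤ k) (x : ℕ → ℂ) (lam0 : ℂ)
    (hnode : ∀ i : ℕ, 1 ≤ i → i ≤ k + 1 → lam0 ≠ x i) (p : ℕ) :
    d2v μ x lam0 p ≠ 0 := by
  refine prod_gev_ne_zero k x lam0 hnode _ fun l hl => ?_
  simp only [Finset.mem_erase, Finset.mem_Icc] at hl
  omega

/-- scalar coefficient pattern of `K1L` evaluated at `lam0` -/
def cK1 (k : ℕ) (x : ℕ → ℂ) (lam0 : ℂ) (p q : ℕ) : ℂ :=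
  if q = p then lam0 - x (k + 1 - p) else if q = p + 1 then -(lam0 - x (k - 1 - p)) else 0

/-- scalar coefficient pattern of `K2L` evaluated at `lam0` -/
def cK2 (μ : ℕ) (x : ℕ → ℂ) (lam0 : ℂ) (p q : ℕ) : ℂ :=
  if q = p then lam0 - x (μ + 2 - p) else if q = p + 1 then -(lam0 - x (μ - p)) else 0

lemma K1e_eq (k μ n : ℕ) (x : ℕ → ℂ) (lam0 : ℂ) :
    (K1L k μ n x).map (eval lam0) =
      Matrix.of fun p q => cK1 k x lam0 (p.1 : ℕ) (q.1 : ℕ) *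
        (if p.2 = q.2 then (1 : ℂ) else 0) := by
  ext p q
  simp [K1L, cK1, gam, Matrix.map_apply, apply_ite (eval lam0), apply_ite (eval lam0)]

lemma K2e_eq (μ m : ℕ) (x : ℕ → ℂ) (lam0 : ℂ) :
    (K2L μ m x).map (eval lam0) =
      Matrix.of fun p q => cK2 μ x lam0 (p.1 : ℕ) (q.1 : ℕ) *
        (if p.2 = q.2 then (1 : ℂ) else 0) := by
  ext p q
  simp [K2L, cK2, gam, Matrix.map_apply, apply_ite (eval lam0)]

lemma D1e_eq (k μ n : ℕ) (x : ℕ → ℂ) (lam0 : ℂ) :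
    (D1LT k μ n x).map (eval lam0) =
      Matrix.of fun p t => d1v k μ x lam0 (p.1 : ℕ) *
        (if p.2 = t then (1 : ℂ) else 0) := by
  ext p t
  simp [D1LT, d1v, gam, Matrix.map_apply, apply_ite (eval lam0), eval_prod]

lemma D2e_eq (μ m : ℕ) (x : ℕ → ℂ) (lam0 : ℂ) :
    (D2LT μ m x).map (eval lam0) =
      Matrix.of fun p t => d2v μ x lam0 (p.1 : ℕ) *
        (if p.2 = t then (1 : ℂ) else 0) := by
  ext p t
  simp [D2LT, d2v, gam, Matrix.map_apply, apply_ite (eval lam0), eval_prod]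

lemma kron_mulVec {a b n : ℕ} (c : ℕ → ℕ → ℂ) (z : Fin b × Fin n → ℂ)
    (p : Fin a) (s : Fin n) :
    ((Matrix.of fun (p : Fin a × Fin n) (q : Fin b × Fin n) =>
        c (p.1 : ℕ) (q.1 : ℕ) * (if p.2 = q.2 then (1 : ℂ) else 0)) *ᵥ z) (p, s)
      = ∑ q : Fin b, c (p : ℕ) (q : ℕ) * z (q, s) := by
  simp [Matrix.mulVec, dotProduct, Fintype.sum_prod_type, mul_ite, ite_mul,
    mul_one, mul_zero, zero_mul, Finset.sum_ite_eq]

lemma kron_vecMul {a b n : ℕ} (c : ℕ → ℕ → ℂ) (w : Fin a × Fin n → ℂ)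
    (q : Fin b) (s : Fin n) :
    (Matrix.vecMul w (Matrix.of fun (p : Fin a × Fin n) (q : Fin b × Fin n) =>
        c (p.1 : ℕ) (q.1 : ℕ) * (if p.2 = q.2 then (1 : ℂ) else 0))) (q, s)
      = ∑ p : Fin a, c (p : ℕ) (q : ℕ) * w (p, s) := by
  simp only [Matrix.vecMul, dotProduct, Fintype.sum_prod_type, Matrix.of_apply]
  refine Finset.sum_congr rfl fun p _ => ?_
  simp [mul_ite, ite_mul, mul_one, mul_zero, zero_mul, Finset.sum_ite_eq',
    mul_comm]

lemma kronT_mulVec {a b n : ℕ} (c : ℕ → ℕ → ℂ) (w : Fin a × Fin n → ℂ)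
    (q : Fin b) (s : Fin n) :
    (((Matrix.of fun (p : Fin a × Fin n) (q : Fin b × Fin n) =>
        c (p.1 : ℕ) (q.1 : ℕ) * (if p.2 = q.2 then (1 : ℂ) else 0)))ᵀ *ᵥ w) (q, s)
      = ∑ p : Fin a, c (p : ℕ) (q : ℕ) * w (p, s) := by
  rw [Matrix.mulVec_transpose]
  exact kron_vecMul c w q s

lemma colkron_mulVec {b n : ℕ} (d : ℕ → ℂ) (v : Fin n → ℂ) (q : Fin b) (s : Fin n) :
    ((Matrix.of fun (p : Fin b × Fin n) (t : Fin n) =>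
        d (p.1 : ℕ) * (if p.2 = t then (1 : ℂ) else 0)) *ᵥ v) (q, s)
      = d (q : ℕ) * v s := by
  simp [Matrix.mulVec, dotProduct, mul_ite, ite_mul, mul_one, mul_zero, zero_mul,
    Finset.sum_ite_eq]


lemma sum_cK1_d1 (k μ : ℕ) (x : ℕ → ℂ) (lam0 : ℂ) (p : Fin (k - μ - 1)) :
    ∑ q : Fin (k - μ), cK1 k x lam0 (p : ℕ) (q : ℕ) * d1v k μ x lam0 (q : ℕ) = 0 := by
  have hp : (p : ℕ) < k - μ - 1 := p.isLt
  rw [Finset.sum_eq_add_of_mem (⟨(p : ℕ), by omega⟩ : Fin (k - μ)) ⟨(p : ℕ) + 1, by omega⟩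
    (Finset.mem_univ _) (Finset.mem_univ _) (by simp [Fin.ext_iff])
    (fun c _ hc => by
      obtain ⟨h1, h2⟩ := hc
      have h1' : (c : ℕ) ≠ (p : ℕ) := fun h => h1 (Fin.ext h)
      have h2' : (c : ℕ) ≠ (p : ℕ) + 1 := fun h => h2 (Fin.ext h)
      simp only [cK1]
      rw [if_neg h1', if_neg h2', zero_mul])]
  rw [show cK1 k x lam0 (p : ℕ) (p : ℕ) = lam0 - x (k + 1 - (p : ℕ)) from by
        unfold cK1; rw [if_pos rfl],
      show cK1 k x lam0 (p : ℕ) ((p : ℕ) + 1) = -(lam0 - x (k - 1 - (p : ℕ))) from by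
        unfold cK1; rw [if_neg (by omega), if_pos rfl]]
  linear_combination d1v_rec k μ x lam0 (p : ℕ) hp

lemma sum_cK2_d2 (μ : ℕ) (x : ℕ → ℂ) (lam0 : ℂ) (p : Fin μ) :
    ∑ q : Fin (μ + 1), cK2 μ x lam0 (p : ℕ) (q : ℕ) * d2v μ x lam0 (q : ℕ) = 0 := by
  have hp : (p : ℕ) < μ := p.isLt
  rw [Finset.sum_eq_add_of_mem (⟨(p : ℕ), by omega⟩ : Fin (μ + 1)) ⟨(p : ℕ) + 1, by omega⟩
    (Finset.mem_univ _) (Finset.mem_univ _) (by simp [Fin.ext_iff])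
    (fun c _ hc => by
      obtain ⟨h1, h2⟩ := hc
      have h1' : (c : ℕ) ≠ (p : ℕ) := fun h => h1 (Fin.ext h)
      have h2' : (c : ℕ) ≠ (p : ℕ) + 1 := fun h => h2 (Fin.ext h)
      simp only [cK2]
      rw [if_neg h1', if_neg h2', zero_mul])]
  rw [show cK2 μ x lam0 (p : ℕ) (p : ℕ) = lam0 - x (μ + 2 - (p : ℕ)) from by
        unfold cK2; rw [if_pos rfl],
      show cK2 μ x lam0 (p : ℕ) ((p : ℕ) + 1) = -(lam0 - x (μ - (p : ℕ))) from by
        unfold cK2; rw [if_neg (by omega), if_pos rfl]]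
  linear_combination d2v_rec μ x lam0 (p : ℕ) hp

lemma K1D1_zero (k μ n : ℕ) (x : ℕ → ℂ) (lam0 : ℂ) :
    ((K1L k μ n x).map (eval lam0)) * ((D1LT k μ n x).map (eval lam0)) = 0 := by
  rw [K1e_eq, D1e_eq]
  ext ⟨p, s⟩ t
  simp only [Matrix.mul_apply, Fintype.sum_prod_type, Matrix.of_apply, Matrix.zero_apply]
  by_cases hst : s = t
  · subst hst
    simp only [mul_ite, ite_mul, mul_one, mul_zero, zero_mul, one_mul,
      Finset.sum_ite_eq, Finset.mem_univ, if_true]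
    simpa using sum_cK1_d1 k μ x lam0 p
  · simp [mul_ite, ite_mul, mul_one, mul_zero, zero_mul, Finset.sum_ite_eq, hst]

lemma K2D2_zero (μ m : ℕ) (x : ℕ → ℂ) (lam0 : ℂ) :
    ((K2L μ m x).map (eval lam0)) * ((D2LT μ m x).map (eval lam0)) = 0 := by
  rw [K2e_eq, D2e_eq]
  ext ⟨p, s⟩ t
  simp only [Matrix.mul_apply, Fintype.sum_prod_type, Matrix.of_apply, Matrix.zero_apply]
  by_cases hst : s = t
  · subst hst
    simp only [mul_ite, ite_mul, mul_one, mul_zero, zero_mul, one_mul,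
      Finset.sum_ite_eq, Finset.mem_univ, if_true]
    simpa using sum_cK2_d2 μ x lam0 p
  · simp [mul_ite, ite_mul, mul_one, mul_zero, zero_mul, Finset.sum_ite_eq, hst]


/-- evaluated entries of `MmuL` -/
def mval (k μ n : ℕ) (x : ℕ → ℂ) (lam0 : ℂ) (P : ℕ → Matrix (Fin n) (Fin n) ℂ)
    (p q : ℕ) (s t : Fin n) : ℂ :=
  if p = 0 ∧ q = 0 then
    wbar k x (k + 1) * (lam0 - x k) * P (k + 1) s t +
      wbar k x k * (lam0 - x (k + 1)) * P k s t
  else if p = 0 then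
    wbar k x (k - q) * (lam0 - x (k + 1 - q)) * P (k - q) s t
  else if q = k - μ - 1 then
    wbar k x (μ + 1 - p) * (lam0 - x (μ + 2 - p)) * P (μ + 1 - p) s t
  else 0

lemma Me_apply (k μ n : ℕ) (x : ℕ → ℂ) (lam0 : ℂ) (P : ℕ → Matrix (Fin n) (Fin n) ℂ)
    (p : Fin (μ + 1) × Fin n) (q : Fin (k - μ) × Fin n) :
    ((MmuL k μ n n x P).map (eval lam0)) p q
      = mval k μ n x lam0 P (p.1 : ℕ) (q.1 : ℕ) p.2 q.2 := by
  simp [MmuL, mval, gam, Matrix.map_apply, apply_ite (eval lam0)]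

lemma Pe_apply (k n : ℕ) (x : ℕ → ℂ) (lam0 : ℂ) (P : ℕ → Matrix (Fin n) (Fin n) ℂ)
    (s t : Fin n) :
    ((PmatL k n n x P).map (eval lam0)) s t
      = ∑ i ∈ Finset.Icc 1 (k + 1),
          wbar k x i * (∏ l ∈ (Finset.Icc 1 (k + 1)).erase i, (lam0 - x l)) * P i s t := by
  simp only [PmatL, Matrix.map_apply, Matrix.sum_apply, Matrix.smul_apply,
    smul_eq_mul, eval_finset_sum, eval_mul, eval_prod, eval_C, gam, eval_sub, eval_X]


lemma double_sum_eval (k μ : ℕ) (hk : 2 ≤ k) (hμ : μ ≤ k - 1)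
    (x : ℕ → ℂ) (lam0 : ℂ) (wf Pv : ℕ → ℂ) :
    (∑ p ∈ Finset.range (μ + 1), ∑ q ∈ Finset.range (k - μ),
      d2v μ x lam0 p *
        (if p = 0 ∧ q = 0 then
            wf (k + 1) * (lam0 - x k) * Pv (k + 1) + wf k * (lam0 - x (k + 1)) * Pv k
          else if p = 0 then wf (k - q) * (lam0 - x (k + 1 - q)) * Pv (k - q)
          else if q = k - μ - 1 then wf (μ + 1 - p) * (lam0 - x (μ + 2 - p)) * Pv (μ + 1 - p)
          else 0) * d1v k μ x lam0 q)
    = ∑ i ∈ Finset.Icc 1 (k + 1),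
        wf i * (∏ l ∈ (Finset.Icc 1 (k + 1)).erase i, (lam0 - x l)) * Pv i := by
  have hkm : 1 ≤ k - μ := by omega
  -- the `p = 0` block-row sum
  rw [Finset.sum_range_succ']
  simp only [Nat.succ_ne_zero, false_and, if_false, eq_self_iff_true, true_and]
  -- part A : the rows `p + 1`, `0 ≤ p < μ`
  have hA : (∑ p ∈ Finset.range μ, ∑ q ∈ Finset.range (k - μ),
      d2v μ x lam0 (p + 1) *
        (if q = k - μ - 1 then
            wf (μ + 1 - (p + 1)) * (lam0 - x (μ + 2 - (p + 1))) * Pv (μ + 1 - (p + 1))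
          else 0) * d1v k μ x lam0 q)
      = ∑ i ∈ Finset.Icc 1 μ,
          wf i * (∏ l ∈ (Finset.Icc 1 (k + 1)).erase i, (lam0 - x l)) * Pv i := by
    have hstep : ∀ p ∈ Finset.range μ, (∑ q ∈ Finset.range (k - μ),
        d2v μ x lam0 (p + 1) *
          (if q = k - μ - 1 then
              wf (μ + 1 - (p + 1)) * (lam0 - x (μ + 2 - (p + 1))) * Pv (μ + 1 - (p + 1))
            else 0) * d1v k μ x lam0 q)
        = wf (μ - p) * (∏ l ∈ (Finset.Icc 1 (k + 1)).erase (μ - p), (lam0 - x l)) *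
            Pv (μ - p) := by
      intro p hp
      rw [Finset.mem_range] at hp
      have hcollapse : (∑ q ∈ Finset.range (k - μ),
          d2v μ x lam0 (p + 1) *
            (if q = k - μ - 1 then
                wf (μ + 1 - (p + 1)) * (lam0 - x (μ + 2 - (p + 1))) * Pv (μ + 1 - (p + 1))
              else 0) * d1v k μ x lam0 q)
          = d2v μ x lam0 (p + 1) *
              (wf (μ - p) * (lam0 - x (μ + 1 - p)) * Pv (μ - p)) *
              d1v k μ x lam0 (k - μ - 1) := by
        rw [show μ + 1 - (p + 1) = μ - p from by omega,
            show μ + 2 - (p + 1) = μ + 1 - p from by omega]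
        simp only [mul_ite, ite_mul, mul_zero, zero_mul]
        rw [Finset.sum_ite_eq' (Finset.range (k - μ)) (k - μ - 1)]
        rw [if_pos (by rw [Finset.mem_range]; omega)]
      rw [hcollapse]
      have hglue : (lam0 - x (μ + 1 - p)) *
          (d2v μ x lam0 (p + 1) * d1v k μ x lam0 (k - μ - 1))
          = ∏ l ∈ (Finset.Icc 1 (k + 1)).erase (μ - p), (lam0 - x l) := by
        unfold d2v d1v
        refine glue_prod x lam0 (μ + 1 - p) _ _ _ ?_ ?_ ?_
        · rw [Finset.disjoint_left]
          intro a ha hb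
          simp only [Finset.mem_erase, Finset.mem_Icc] at ha hb
          omega
        · simp only [Finset.mem_union, Finset.mem_erase, Finset.mem_Icc]
          omega
        · ext l
          simp only [Finset.mem_insert, Finset.mem_union, Finset.mem_erase, Finset.mem_Icc]
          omega
      linear_combination (wf (μ - p) * Pv (μ - p)) * hglue
    rw [Finset.sum_congr rfl hstep]
    refine Finset.sum_nbij' (fun p => μ - p) (fun i => μ - i) ?_ ?_ ?_ ?_ ?_ <;>
      intro a ha <;>
      simp only [Finset.mem_range, Finset.mem_Icc] at * <;> first | omega | (congr 1 <;> omega)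
  rw [hA]
  -- part B : the row `p = 0`
  rw [show k - μ = (k - μ - 1) + 1 from by omega, Finset.sum_range_succ']
  simp only [Nat.succ_ne_zero, if_false, eq_self_iff_true, if_true]
  -- part B1 : the entries `q + 1`, `0 ≤ q < k - μ - 1`
  have hB1 : (∑ q ∈ Finset.range (k - μ - 1),
      d2v μ x lam0 0 *
        (wf (k - (q + 1)) * (lam0 - x (k + 1 - (q + 1))) * Pv (k - (q + 1))) *
        d1v k μ x lam0 (q + 1))
      = ∑ i ∈ Finset.Icc (μ + 1) (k - 1),
          wf i * (∏ l ∈ (Finset.Icc 1 (k + 1)).erase i, (lam0 - x l)) * Pv i := by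
    have hstep : ∀ q ∈ Finset.range (k - μ - 1),
        d2v μ x lam0 0 *
          (wf (k - (q + 1)) * (lam0 - x (k + 1 - (q + 1))) * Pv (k - (q + 1))) *
          d1v k μ x lam0 (q + 1)
        = wf (k - 1 - q) * (∏ l ∈ (Finset.Icc 1 (k + 1)).erase (k - 1 - q), (lam0 - x l)) *
            Pv (k - 1 - q) := by
      intro q hq
      rw [Finset.mem_range] at hq
      rw [show k - (q + 1) = k - 1 - q from by omega,
          show k + 1 - (q + 1) = k - q from by omega]
      have hglue : (lam0 - x (k - q)) *
          (d2v μ x lam0 0 * d1v k μ x lam0 (q + 1))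
          = ∏ l ∈ (Finset.Icc 1 (k + 1)).erase (k - 1 - q), (lam0 - x l) := by
        unfold d2v d1v
        refine glue_prod x lam0 (k - q) _ _ _ ?_ ?_ ?_
        · rw [Finset.disjoint_left]
          intro a ha hb
          simp only [Finset.mem_erase, Finset.mem_Icc] at ha hb
          omega
        · simp only [Finset.mem_union, Finset.mem_erase, Finset.mem_Icc]
          omega
        · ext l
          simp only [Finset.mem_insert, Finset.mem_union, Finset.mem_erase, Finset.mem_Icc]
          omega
      linear_combination (wf (k - 1 - q) * Pv (k - 1 - q)) * hglue
    rw [Finset.sum_congr rfl hstep]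
    refine Finset.sum_nbij' (fun q => k - 1 - q) (fun i => k - 1 - i) ?_ ?_ ?_ ?_ ?_ <;>
      intro a ha <;>
      simp only [Finset.mem_range, Finset.mem_Icc] at * <;> first | omega | (congr 1 <;> omega)
  rw [hB1]
  -- part B0 : the entry `p = 0, q = 0`
  have hg1 : (lam0 - x k) * (d2v μ x lam0 0 * d1v k μ x lam0 0)
      = ∏ l ∈ (Finset.Icc 1 (k + 1)).erase (k + 1), (lam0 - x l) := by
    unfold d2v d1v
    refine glue_prod x lam0 k _ _ _ ?_ ?_ ?_
    · rw [Finset.disjoint_left]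
      intro a ha hb
      simp only [Finset.mem_erase, Finset.mem_Icc] at ha hb
      omega
    · simp only [Finset.mem_union, Finset.mem_erase, Finset.mem_Icc]
      omega
    · ext l
      simp only [Finset.mem_insert, Finset.mem_union, Finset.mem_erase, Finset.mem_Icc]
      omega
  have hg2 : (lam0 - x (k + 1)) * (d2v μ x lam0 0 * d1v k μ x lam0 0)
      = ∏ l ∈ (Finset.Icc 1 (k + 1)).erase k, (lam0 - x l) := by
    unfold d2v d1v
    refine glue_prod x lam0 (k + 1) _ _ _ ?_ ?_ ?_
    · rw [Finset.disjoint_left]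
      intro a ha hb
      simp only [Finset.mem_erase, Finset.mem_Icc] at ha hb
      omega
    · simp only [Finset.mem_union, Finset.mem_erase, Finset.mem_Icc]
      omega
    · ext l
      simp only [Finset.mem_insert, Finset.mem_union, Finset.mem_erase, Finset.mem_Icc]
      omega
  -- decompose the right-hand side
  have hdecomp : Finset.Icc 1 (k + 1)
      = (Finset.Icc 1 μ ∪ Finset.Icc (μ + 1) (k - 1)) ∪ {k, k + 1} := by
    ext i
    simp only [Finset.mem_Icc, Finset.mem_union, Finset.mem_insert, Finset.mem_singleton]
    omega
  rw [hdecomp, Finset.sum_union (by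
        rw [Finset.disjoint_left]
        intro a ha hb
        simp only [Finset.mem_union, Finset.mem_insert, Finset.mem_singleton,
          Finset.mem_Icc] at ha hb
        omega),
      Finset.sum_union (by
        rw [Finset.disjoint_left]
        intro a ha hb
        simp only [Finset.mem_Icc] at ha hb
        omega),
      Finset.sum_pair (by omega : k ≠ k + 1)]
  rw [← hdecomp]
  linear_combination Pv (k + 1) * wf (k + 1) * hg1 + Pv k * wf k * hg2

lemma main_identity (k μ n : ℕ) (hk : 2 ≤ k) (hμ : μ ≤ k - 1)
    (x : ℕ → ℂ) (lam0 : ℂ) (P : ℕ → Matrix (Fin n) (Fin n) ℂ) :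
    ((D2LT μ n x).map (eval lam0))ᵀ * ((MmuL k μ n n x P).map (eval lam0))
        * ((D1LT k μ n x).map (eval lam0))
      = (PmatL k n n x P).map (eval lam0) := by
  rw [D2e_eq, D1e_eq]
  ext s t
  rw [Pe_apply]
  simp only [Matrix.mul_apply, Matrix.transpose_apply, Matrix.of_apply,
    Fintype.sum_prod_type, Me_apply, mul_ite, ite_mul, mul_zero, zero_mul,
    mul_one, one_mul, Finset.sum_ite_eq, Finset.sum_ite_eq', Finset.mem_univ, if_true]
  trans (∑ q ∈ Finset.range (k - μ), (∑ p ∈ Finset.range (μ + 1),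
      d2v μ x lam0 p * mval k μ n x lam0 P p q s t) * d1v k μ x lam0 q)
  · rw [← Fin.sum_univ_eq_sum_range (fun q => (∑ p ∈ Finset.range (μ + 1),
        d2v μ x lam0 p * mval k μ n x lam0 P p q s t) * d1v k μ x lam0 q) (k - μ)]
    refine Finset.sum_congr rfl fun q _ => ?_
    congr 1
    rw [← Fin.sum_univ_eq_sum_range (fun p =>
        d2v μ x lam0 p * mval k μ n x lam0 P p (q : ℕ) s t) (μ + 1)]
  · simp only [Finset.sum_mul]
    rw [Finset.sum_comm]
    have := double_sum_eval k μ hk hμ x lam0 (fun i => wbar k x i) (fun i => P i s t)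
    unfold mval
    exact this

lemma sum_support_one' {m : ℕ} (c : ℕ → ℂ) (a : ℕ) (ha : a < m)
    (hc : ∀ p : Fin m, (p : ℕ) ≠ a → c (p : ℕ) = 0) (g : Fin m → ℂ) :
    ∑ p : Fin m, c (p : ℕ) * g p = c a * g ⟨a, ha⟩ := by
  rw [Finset.sum_eq_single_of_mem (⟨a, ha⟩ : Fin m) (Finset.mem_univ _)
    (fun q _ hq => by rw [hc q (fun h => hq (Fin.ext h)), zero_mul])]

lemma sum_support_two' {m : ℕ} (c : ℕ → ℂ) (a b : ℕ) (hab : a ≠ b) (ha : a < m) (hb : b < m)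
    (hc : ∀ p : Fin m, (p : ℕ) ≠ a → (p : ℕ) ≠ b → c (p : ℕ) = 0) (g : Fin m → ℂ) :
    ∑ p : Fin m, c (p : ℕ) * g p = c a * g ⟨a, ha⟩ + c b * g ⟨b, hb⟩ := by
  rw [Finset.sum_eq_add_of_mem (⟨a, ha⟩ : Fin m) ⟨b, hb⟩ (Finset.mem_univ _) (Finset.mem_univ _)
    (by simp [Fin.ext_iff, hab])
    (fun q _ hq => by
      rw [hc q (fun h => hq.1 (Fin.ext h)) (fun h => hq.2 (Fin.ext h)), zero_mul])]

lemma map_eval_block (k μ n : ℕ) (x : ℕ → ℂ) (lam0 : ℂ)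
    (P : ℕ → Matrix (Fin n) (Fin n) ℂ)
    (A : Matrix (Fin (μ + 1) × Fin n) (Fin (k - μ - 1) × Fin n) ℂ)
    (B : Matrix (Fin μ × Fin n) (Fin (k - μ) × Fin n) ℂ) :
    (Matrix.fromBlocks
      (MmuL k μ n n x P + A.map C * K1L k μ n x + (K2L μ n x).transpose * B.map C)
      (K2L μ n x).transpose (K1L k μ n x) 0).map (eval lam0)
    = Matrix.fromBlocks
      ((MmuL k μ n n x P).map (eval lam0) + A * ((K1L k μ n x).map (eval lam0))
        + ((K2L μ n x).map (eval lam0))ᵀ * B)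
      ((K2L μ n x).map (eval lam0))ᵀ ((K1L k μ n x).map (eval lam0)) 0 := by
  have hco : (eval lam0) = ⇑(evalRingHom lam0) := rfl
  rw [hco, Matrix.fromBlocks_map]
  have hA : (A.map C).map ⇑(evalRingHom lam0) = A := by
    ext i j; simp [Matrix.map_apply]
  have hB : (B.map C).map ⇑(evalRingHom lam0) = B := by
    ext i j; simp [Matrix.map_apply]
  rw [Matrix.map_add _ (by simp) _ _, Matrix.map_add _ (by simp) _ _,
      Matrix.map_mul, Matrix.map_mul, hA, hB]
  simp only [Matrix.transpose_map]
  rw [Matrix.map_zero _ (by simp)]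
/-- Recovery of eigenvectors (at finite eigenvalues away from the nodes) from Lagrange
linearizations: every block `z(1), …, z(k-μ)` of a right eigenvector is a right
eigenvector of `P`, and every block `w(1), …, w(μ+1)` of a left eigenvector is a left
eigenvector of `P`. -/
theorem lagrange_linearization_eigenvector_recovery
    (k μ n : ℕ) (hk : 2 ≤ k) (hμ : μ ≤ k - 1) (hn : 0 < n)
    (x : ℕ → ℂ)
    (hx : ∀ i j : ℕ, 1 ≤ i → i ≤ k + 1 → 1 ≤ j → j ≤ k + 1 → x i = x j → i = j)
    (P : ℕ → Matrix (Fin n) (Fin n) ℂ)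
    (hreg : (PmatL k n n x P).det ≠ 0)
    (A : Matrix (Fin (μ + 1) × Fin n) (Fin (k - μ - 1) × Fin n) ℂ)
    (B : Matrix (Fin μ × Fin n) (Fin (k - μ) × Fin n) ℂ)
    (L : Matrix ((Fin (μ + 1) × Fin n) ⊕ (Fin (k - μ - 1) × Fin n))
      ((Fin (k - μ) × Fin n) ⊕ (Fin μ × Fin n)) (Polynomial ℂ))
    (hL : L = Matrix.fromBlocks
      (MmuL k μ n n x P + A.map C * K1L k μ n x + (K2L μ n x).transpose * B.map C)
      (K2L μ n x).transpose (K1L k μ n x) 0)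
    (lam0 : ℂ) (heig : ((PmatL k n n x P).map (eval lam0)).det = 0)
    (hnode : ∀ i : ℕ, 1 ≤ i → i ≤ k + 1 → lam0 ≠ x i) :
    (∀ z : ((Fin (k - μ) × Fin n) ⊕ (Fin μ × Fin n)) → ℂ,
      z ≠ 0 → (L.map (eval lam0)).mulVec z = 0 →
      ∀ j : Fin (k - μ),
        (fun s => z (Sum.inl (j, s))) ≠ 0 ∧
        ((PmatL k n n x P).map (eval lam0)).mulVec (fun s => z (Sum.inl (j, s))) = 0) ∧
    (∀ w : ((Fin (μ + 1) × Fin n) ⊕ (Fin (k - μ - 1) × Fin n)) → ℂ,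
      w ≠ 0 → Matrix.vecMul w (L.map (eval lam0)) = 0 →
      ∀ j : Fin (μ + 1),
        (fun s => w (Sum.inl (j, s))) ≠ 0 ∧
        Matrix.vecMul (fun s => w (Sum.inl (j, s)))
          ((PmatL k n n x P).map (eval lam0)) = 0) := by
  have hkm1 : 1 ≤ k - μ := by omega
  have hd1ne : ∀ q : ℕ, d1v k μ x lam0 q ≠ 0 := d1v_ne_zero k μ x lam0 hnode
  have hd2ne : ∀ p : ℕ, d2v μ x lam0 p ≠ 0 := d2v_ne_zero k μ hμ hk x lam0 hnode
  have hgne : ∀ i : ℕ, 1 ≤ i → i ≤ k + 1 → lam0 - x i ≠ 0 :=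
    fun i h1 h2 => sub_ne_zero.2 (hnode i h1 h2)
  have hLe : L.map (eval lam0) = Matrix.fromBlocks
      ((MmuL k μ n n x P).map (eval lam0) + A * ((K1L k μ n x).map (eval lam0))
        + ((K2L μ n x).map (eval lam0))ᵀ * B)
      ((K2L μ n x).map (eval lam0))ᵀ ((K1L k μ n x).map (eval lam0)) 0 := by
    rw [hL]; exact map_eval_block k μ n x lam0 P A B
  constructor
  · -- right eigenvectors
    intro z hz h0 j
    set z1 : Fin (k - μ) × Fin n → ℂ := fun q => z (Sum.inl q) with hz1def
    set z2 : Fin μ × Fin n → ℂ := fun q => z (Sum.inr q) with hz2def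
    have hze : z = Sum.elim z1 z2 := by funext r; cases r <;> rfl
    rw [hLe, hze, Matrix.fromBlocks_mulVec] at h0
    have htop0 : ((MmuL k μ n n x P).map (eval lam0) + A * ((K1L k μ n x).map (eval lam0))
        + ((K2L μ n x).map (eval lam0))ᵀ * B) *ᵥ z1
        + ((K2L μ n x).map (eval lam0))ᵀ *ᵥ z2 = 0 := by
      funext r; exact congrFun h0 (Sum.inl r)
    have hbot : ((K1L k μ n x).map (eval lam0)) *ᵥ z1 = 0 := by
      funext r
      have h := congrFun h0 (Sum.inr r)
      simpa [Matrix.zero_mulVec] using h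
    have hrec : ∀ (p : ℕ) (hp : p < k - μ - 1) (s : Fin n),
        (lam0 - x (k + 1 - p)) * z1 (⟨p, by omega⟩, s)
          = (lam0 - x (k - 1 - p)) * z1 (⟨p + 1, by omega⟩, s) := by
      intro p hp s
      have h := congrFun hbot (⟨p, hp⟩, s)
      rw [K1e_eq, kron_mulVec] at h
      simp only [Fin.val_mk, Pi.zero_apply] at h
      rw [sum_support_two' (fun qn => cK1 k x lam0 p qn) p (p + 1) (by omega) (by omega)
        (by omega) (fun q h1 h2 => by show cK1 k x lam0 p (q : ℕ) = 0; unfold cK1; rw [if_neg h1, if_neg h2])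
        (fun q => z1 (q, s))] at h
      rw [show cK1 k x lam0 p p = lam0 - x (k + 1 - p) from by unfold cK1; rw [if_pos rfl],
          show cK1 k x lam0 p (p + 1) = -(lam0 - x (k - 1 - p)) from by
            unfold cK1; rw [if_neg (by omega), if_pos rfl]] at h
      linear_combination h
    set v : Fin n → ℂ := fun s => (d1v k μ x lam0 0)⁻¹ * z1 (⟨0, by omega⟩, s) with hvdef
    have hz1 : ∀ (q : ℕ) (hq : q < k - μ) (s : Fin n),
        z1 (⟨q, hq⟩, s) = d1v k μ x lam0 q * v s := by
      intro q
      induction q with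
      | zero =>
        intro hq s
        show z1 (⟨0, hq⟩, s)
          = d1v k μ x lam0 0 * ((d1v k μ x lam0 0)⁻¹ * z1 (⟨0, by omega⟩, s))
        rw [← mul_assoc, mul_inv_cancel₀ (hd1ne 0), one_mul]
      | succ q ih =>
        intro hq s
        have hq1 : q < k - μ - 1 := by omega
        have hgn : lam0 - x (k - 1 - q) ≠ 0 := hgne _ (by omega) (by omega)
        refine mul_left_cancel₀ hgn ?_
        rw [← hrec q hq1 s, ih (by omega) s]
        linear_combination (v s) * d1v_rec k μ x lam0 q hq1
    have hz1fun : ∀ (q : Fin (k - μ)) (s : Fin n),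
        z1 (q, s) = d1v k μ x lam0 (q : ℕ) * v s := by
      intro q s
      have h := hz1 (q : ℕ) q.isLt s
      rwa [Fin.eta] at h
    have hz1D : z1 = ((D1LT k μ n x).map (eval lam0)) *ᵥ v := by
      funext r
      obtain ⟨q, s⟩ := r
      rw [hz1fun q s, D1e_eq, colkron_mulVec]
    have hvne : v ≠ 0 := by
      intro hv0
      apply hz
      have hz1z : z1 = 0 := by
        funext r; obtain ⟨q, s⟩ := r; simp [hz1fun q s, hv0]
      have hK2z2 : ((K2L μ n x).map (eval lam0))ᵀ *ᵥ z2 = 0 := by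
        have h := htop0
        rw [hz1z, Matrix.mulVec_zero] at h
        simpa using h
      have hz2z : ∀ (p : ℕ) (hp : p < μ) (s : Fin n), z2 (⟨p, hp⟩, s) = 0 := by
        intro p
        induction p with
        | zero =>
          intro hp s
          have h := congrFun hK2z2 (⟨0, by omega⟩, s)
          rw [K2e_eq, kronT_mulVec] at h
          simp only [Fin.val_mk, Pi.zero_apply] at h
          rw [sum_support_one' (fun pn => cK2 μ x lam0 pn 0) 0 hp
            (fun q hq => by show cK2 μ x lam0 (q : ℕ) 0 = 0; unfold cK2; rw [if_neg (by omega), if_neg (by omega)])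
            (fun q => z2 (q, s))] at h
          rw [show cK2 μ x lam0 0 0 = lam0 - x (μ + 2) from by
            unfold cK2; rw [if_pos rfl, Nat.sub_zero]] at h
          exact (mul_eq_zero.mp h).resolve_left (hgne _ (by omega) (by omega))
        | succ p ih =>
          intro hp s
          have h := congrFun hK2z2 (⟨p + 1, by omega⟩, s)
          rw [K2e_eq, kronT_mulVec] at h
          simp only [Fin.val_mk, Pi.zero_apply] at h
          rw [sum_support_two' (fun pn => cK2 μ x lam0 pn (p + 1)) p (p + 1) (by omega)
            (by omega) hp
            (fun q h1 h2 => by show cK2 μ x lam0 (q : ℕ) (p + 1) = 0; unfold cK2; rw [if_neg (by omega), if_neg (by omega)])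
            (fun q => z2 (q, s))] at h
          rw [ih (by omega) s,
            show cK2 μ x lam0 (p + 1) (p + 1) = lam0 - x (μ + 1 - p) from by
              unfold cK2
              rw [if_pos rfl, show μ + 2 - (p + 1) = μ + 1 - p from by omega]] at h
          simp only [mul_zero, zero_add] at h
          exact (mul_eq_zero.mp h).resolve_left (hgne _ (by omega) (by omega))
      funext r
      cases r with
      | inl q =>
        obtain ⟨qq, s⟩ := q
        exact congrFun hz1z (qq, s)
      | inr q =>
        obtain ⟨qq, s⟩ := q
        have h := hz2z (qq : ℕ) qq.isLt s
        rwa [Fin.eta] at h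
    have htop2 : ((MmuL k μ n n x P).map (eval lam0)) *ᵥ z1
        + ((K2L μ n x).map (eval lam0))ᵀ *ᵥ (B *ᵥ z1 + z2) = 0 := by
      have h := htop0
      rw [Matrix.add_mulVec, Matrix.add_mulVec, ← Matrix.mulVec_mulVec, hbot,
        Matrix.mulVec_zero, add_zero, ← Matrix.mulVec_mulVec] at h
      rw [Matrix.mulVec_add, ← add_assoc]
      exact h
    have hPv : ((PmatL k n n x P).map (eval lam0)) *ᵥ v = 0 := by
      have h2 := congrArg (fun u => ((D2LT μ n x).map (eval lam0))ᵀ *ᵥ u) htop2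
      simp only [Matrix.mulVec_add, Matrix.mulVec_zero] at h2
      rw [hz1D] at h2
      simp only [Matrix.mulVec_mulVec] at h2
      rw [← Matrix.mul_assoc, ← Matrix.mul_assoc,
        show ((D2LT μ n x).map (eval lam0))ᵀ * ((K2L μ n x).map (eval lam0))ᵀ = 0 from by
          rw [← Matrix.transpose_mul, K2D2_zero, Matrix.transpose_zero],
        Matrix.zero_mul] at h2
      simp only [Matrix.zero_mulVec, add_zero, zero_add] at h2
      rw [main_identity k μ n hk hμ x lam0 P] at h2
      exact h2
    refine ⟨?_, ?_⟩
    · intro h00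
      apply hvne
      funext s
      have h1 : z1 (j, s) = 0 := congrFun h00 s
      have h2 := hz1fun j s
      rw [h1] at h2
      have h3 := (mul_eq_zero.mp h2.symm).resolve_left (hd1ne (j : ℕ))
      simpa using h3
    · have heq : (fun s => z (Sum.inl (j, s))) = (d1v k μ x lam0 (j : ℕ)) • v := by
        funext s
        rw [Pi.smul_apply, smul_eq_mul]
        exact hz1fun j s
      rw [heq, Matrix.mulVec_smul, hPv, smul_zero]
  · -- left eigenvectors
    intro w hw h0 j
    set w1 : Fin (μ + 1) × Fin n → ℂ := fun q => w (Sum.inl q) with hw1def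
    set w2 : Fin (k - μ - 1) × Fin n → ℂ := fun q => w (Sum.inr q) with hw2def
    have hwe : w = Sum.elim w1 w2 := by funext r; cases r <;> rfl
    rw [hLe, hwe, Matrix.vecMul_fromBlocks] at h0
    have htop0 : Matrix.vecMul w1 ((MmuL k μ n n x P).map (eval lam0)
          + A * ((K1L k μ n x).map (eval lam0))
          + ((K2L μ n x).map (eval lam0))ᵀ * B)
        + Matrix.vecMul w2 ((K1L k μ n x).map (eval lam0)) = 0 := by
      funext r; exact congrFun h0 (Sum.inl r)
    have hside : Matrix.vecMul w1 (((K2L μ n x).map (eval lam0))ᵀ) = 0 := by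
      funext r
      have h := congrFun h0 (Sum.inr r)
      simpa [Matrix.vecMul_zero] using h
    have hK2w1 : ((K2L μ n x).map (eval lam0)) *ᵥ w1 = 0 := by
      rw [← Matrix.vecMul_transpose]; exact hside
    have hrec : ∀ (p : ℕ) (hp : p < μ) (s : Fin n),
        (lam0 - x (μ + 2 - p)) * w1 (⟨p, by omega⟩, s)
          = (lam0 - x (μ - p)) * w1 (⟨p + 1, by omega⟩, s) := by
      intro p hp s
      have h := congrFun hK2w1 (⟨p, hp⟩, s)
      rw [K2e_eq, kron_mulVec] at h
      simp only [Fin.val_mk, Pi.zero_apply] at h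
      rw [sum_support_two' (fun qn => cK2 μ x lam0 p qn) p (p + 1) (by omega) (by omega)
        (by omega) (fun q h1 h2 => by show cK2 μ x lam0 p (q : ℕ) = 0; unfold cK2; rw [if_neg h1, if_neg h2])
        (fun q => w1 (q, s))] at h
      rw [show cK2 μ x lam0 p p = lam0 - x (μ + 2 - p) from by unfold cK2; rw [if_pos rfl],
          show cK2 μ x lam0 p (p + 1) = -(lam0 - x (μ - p)) from by
            unfold cK2; rw [if_neg (by omega), if_pos rfl]] at h
      linear_combination h
    set u : Fin n → ℂ := fun s => (d2v μ x lam0 0)⁻¹ * w1 (⟨0, by omega⟩, s) with hudef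
    have hw1 : ∀ (q : ℕ) (hq : q < μ + 1) (s : Fin n),
        w1 (⟨q, hq⟩, s) = d2v μ x lam0 q * u s := by
      intro q
      induction q with
      | zero =>
        intro hq s
        show w1 (⟨0, hq⟩, s)
          = d2v μ x lam0 0 * ((d2v μ x lam0 0)⁻¹ * w1 (⟨0, by omega⟩, s))
        rw [← mul_assoc, mul_inv_cancel₀ (hd2ne 0), one_mul]
      | succ q ih =>
        intro hq s
        have hq1 : q < μ := by omega
        have hgn : lam0 - x (μ - q) ≠ 0 := hgne _ (by omega) (by omega)
        refine mul_left_cancel₀ hgn ?_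
        rw [← hrec q hq1 s, ih (by omega) s]
        linear_combination (u s) * d2v_rec μ x lam0 q hq1
    have hw1fun : ∀ (q : Fin (μ + 1)) (s : Fin n),
        w1 (q, s) = d2v μ x lam0 (q : ℕ) * u s := by
      intro q s
      have h := hw1 (q : ℕ) q.isLt s
      rwa [Fin.eta] at h
    have hw1D : w1 = ((D2LT μ n x).map (eval lam0)) *ᵥ u := by
      funext r
      obtain ⟨q, s⟩ := r
      rw [hw1fun q s, D2e_eq, colkron_mulVec]
    have hune : u ≠ 0 := by
      intro hu0
      apply hw
      have hw1z : w1 = 0 := by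
        funext r; obtain ⟨q, s⟩ := r; simp [hw1fun q s, hu0]
      have hw2K : Matrix.vecMul w2 ((K1L k μ n x).map (eval lam0)) = 0 := by
        have h := htop0
        rw [hw1z, Matrix.zero_vecMul, zero_add] at h
        exact h
      have hw2z : ∀ (p : ℕ) (hp : p < k - μ - 1) (s : Fin n), w2 (⟨p, hp⟩, s) = 0 := by
        intro p
        induction p with
        | zero =>
          intro hp s
          have h := congrFun hw2K (⟨0, by omega⟩, s)
          rw [K1e_eq, kron_vecMul] at h
          simp only [Fin.val_mk, Pi.zero_apply] at h
          rw [sum_support_one' (fun pn => cK1 k x lam0 pn 0) 0 hp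
            (fun q hq => by show cK1 k x lam0 (q : ℕ) 0 = 0; unfold cK1; rw [if_neg (by omega), if_neg (by omega)])
            (fun q => w2 (q, s))] at h
          rw [show cK1 k x lam0 0 0 = lam0 - x (k + 1) from by
            unfold cK1; rw [if_pos rfl, Nat.sub_zero]] at h
          exact (mul_eq_zero.mp h).resolve_left (hgne _ (by omega) (by omega))
        | succ p ih =>
          intro hp s
          have h := congrFun hw2K (⟨p + 1, by omega⟩, s)
          rw [K1e_eq, kron_vecMul] at h
          simp only [Fin.val_mk, Pi.zero_apply] at h
          rw [sum_support_two' (fun pn => cK1 k x lam0 pn (p + 1)) p (p + 1) (by omega)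
            (by omega) hp
            (fun q h1 h2 => by show cK1 k x lam0 (q : ℕ) (p + 1) = 0; unfold cK1; rw [if_neg (by omega), if_neg (by omega)])
            (fun q => w2 (q, s))] at h
          rw [ih (by omega) s,
            show cK1 k x lam0 (p + 1) (p + 1) = lam0 - x (k - p) from by
              unfold cK1
              rw [if_pos rfl, show k + 1 - (p + 1) = k - p from by omega]] at h
          simp only [mul_zero, zero_add] at h
          exact (mul_eq_zero.mp h).resolve_left (hgne _ (by omega) (by omega))
      funext r
      cases r with
      | inl q =>
        obtain ⟨qq, s⟩ := q
        exact congrFun hw1z (qq, s)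
      | inr q =>
        obtain ⟨qq, s⟩ := q
        have h := hw2z (qq : ℕ) qq.isLt s
        rwa [Fin.eta] at h
    have htop2 : Matrix.vecMul w1 ((MmuL k μ n n x P).map (eval lam0))
        + Matrix.vecMul (Matrix.vecMul w1 A + w2) ((K1L k μ n x).map (eval lam0)) = 0 := by
      have h := htop0
      rw [Matrix.vecMul_add, Matrix.vecMul_add, ← Matrix.vecMul_vecMul,
        ← Matrix.vecMul_vecMul, hside, Matrix.zero_vecMul, add_zero] at h
      rw [Matrix.add_vecMul, ← add_assoc]
      exact h
    have hPu : Matrix.vecMul u ((PmatL k n n x P).map (eval lam0)) = 0 := by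
      have h2 := congrArg (fun y => Matrix.vecMul y ((D1LT k μ n x).map (eval lam0))) htop2
      simp only [Matrix.add_vecMul, Matrix.zero_vecMul, Matrix.vecMul_vecMul] at h2
      rw [Matrix.mul_assoc A, K1D1_zero] at h2
      simp only [Matrix.mul_zero, Matrix.vecMul_zero, add_zero] at h2
      rw [hw1D,
        ← Matrix.transpose_transpose ((D2LT μ n x).map (eval lam0)),
        Matrix.mulVec_transpose, Matrix.vecMul_vecMul, ← Matrix.mul_assoc,
        main_identity k μ n hk hμ x lam0 P] at h2
      exact h2
    refine ⟨?_, ?_⟩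
    · intro h00
      apply hune
      funext s
      have h1 : w1 (j, s) = 0 := congrFun h00 s
      have h2 := hw1fun j s
      rw [h1] at h2
      have h3 := (mul_eq_zero.mp h2.symm).resolve_left (hd2ne (j : ℕ))
      simpa using h3
    · have heq : (fun s => w (Sum.inl (j, s))) = (d2v μ x lam0 (j : ℕ)) • u := by
        funext s
        rw [Pi.smul_apply, smul_eq_mul]
        exact hw1fun j s
      rw [heq, Matrix.smul_vecMul, hPu, smul_zero]
end
end

section
/- For r ∈ {1,2}: if 1 ≤ ε ≤ k−1 then K_1^{(C,r)}(λ)·D_1^{(C,r)}(λ) = 0 identically in λ, and if 0 ≤ ε ≤ k−2 then K_2^{(C,r)}(λ)·D_2^{(C,r)}(λ) = 0 identically in λ; moreover, for every λ_0 ∈ ℂ, the evaluated matrices K_1^{(C,r)}(λ_0) and K_2^{(C,r)}(λ_0) have full row rank and D_1^{(C,r)}(λ_0) and D_2^{(C,r)}(λ_0) have full column rank. -/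
open Polynomial Matrix

noncomputable section

/-- `chebP r i` is the `i`-th Chebyshev polynomial of the `r`-th kind (`r ∈ {1,2}`):
`φ_0 = 1`, `φ_1 = X` (first kind) or `2X` (second kind), and
`φ_{i+2} = 2X φ_{i+1} - φ_i`. -/
def chebP (r : ℕ) : ℕ → Polynomial ℂ
  | 0 => 1
  | 1 => if r = 1 then X else 2 * X
  | (i + 2) => 2 * X * chebP r (i + 1) - chebP r i

/-- The Chebyshev pencil `K^{(C,r)}(λ)` with `rows` block rows, `cols` block columns and
`sz × sz` blocks: row `j` (1-based, `j < rows`) has `I` in column `j`, `-2λ I` in column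
`j+1` and `I` in column `j+2`; the last row has `I` in column `rows` and
`-φ_1^{(r)}(λ) I` in column `rows+1`. -/
def KC (r rows cols sz : ℕ) :
    Matrix (Fin rows × Fin sz) (Fin cols × Fin sz) (Polynomial ℂ) :=
  Matrix.of fun p q =>
    (if (q.1 : ℕ) = (p.1 : ℕ) then 1
      else if (q.1 : ℕ) = (p.1 : ℕ) + 1 then
        (if (p.1 : ℕ) + 1 = rows then -chebP r 1 else -(2 * X))
      else if (q.1 : ℕ) = (p.1 : ℕ) + 2 then 1 else 0) *
    (if p.2 = q.2 then 1 else 0)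

/-- `D_1^{(C,r)}(λ)`: block column with `ε+1` blocks whose `i`-th block (1-based) is
`φ_{ε+1-i}^{(r)}(λ) I_n`. -/
def D1C (r ε n : ℕ) : Matrix (Fin (ε + 1) × Fin n) (Fin n) (Polynomial ℂ) :=
  Matrix.of fun p t => chebP r (ε - (p.1 : ℕ)) * (if p.2 = t then 1 else 0)

/-- `D_2^{(C,r)}(λ)`: block column with `d = k-ε` blocks whose `i`-th block (1-based) is
`φ_{d-i}^{(r)}(λ) I_m`. -/
def D2C (r d m : ℕ) : Matrix (Fin d × Fin m) (Fin m) (Polynomial ℂ) :=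
  Matrix.of fun p t => chebP r (d - 1 - (p.1 : ℕ)) * (if p.2 = t then 1 else 0)

/-- The matrix polynomial `P(λ) = Σ_{i=0}^{k} P_i φ_i^{(r)}(λ)` in the Chebyshev basis
of the `r`-th kind. -/
def PmatC (r k m n : ℕ) (P : ℕ → Matrix (Fin m) (Fin n) ℂ) :
    Matrix (Fin m) (Fin n) (Polynomial ℂ) :=
  ∑ i ∈ Finset.range (k + 1), chebP r i • (P i).map C

/-- The body `M_ε^C(λ)`: `(k-ε) × (ε+1)` block matrix whose first block column is
`2λP_k + P_{k-1}, P_{k-2} - P_k, P_{k-3}, …, P_{ε+1}, P_ε` (top to bottom), whose second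
block column is `-P_k, -P_{k-1}, …, -P_{ε+2}, P_{ε-1} - P_{ε+1}` (top to bottom), whose
last block row has `P_{ε-2}, P_{ε-3}, …, P_0` in columns `3, …, ε+1`, and whose other
blocks are `0` (1-based block indices). -/
def MC (k ε m n : ℕ) (P : ℕ → Matrix (Fin m) (Fin n) ℂ) :
    Matrix (Fin (k - ε) × Fin m) (Fin (ε + 1) × Fin n) (Polynomial ℂ) :=
  Matrix.of fun p q =>
    if (q.1 : ℕ) = 0 then
      (if (p.1 : ℕ) = 0 then 2 * X * C (P k p.2 q.2) + C (P (k - 1) p.2 q.2)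
        else if (p.1 : ℕ) = 1 then C (P (k - 2) p.2 q.2) - C (P k p.2 q.2)
        else C (P (k - 1 - (p.1 : ℕ)) p.2 q.2))
    else if (q.1 : ℕ) = 1 then
      (if (p.1 : ℕ) = k - ε - 1 then C (P (ε - 1) p.2 q.2) - C (P (ε + 1) p.2 q.2)
        else -C (P (k - (p.1 : ℕ)) p.2 q.2))
    else if (p.1 : ℕ) = k - ε - 1 then C (P (ε - (q.1 : ℕ)) p.2 q.2)
    else 0

/-- The colleague Chebyshev pencil
`C_P^{r,ε}(λ) = [[M_ε^C(λ), K_2^{(C,2)}(λ)^T], [K_1^{(C,r)}(λ), 0]]`. -/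
def CPre (r k ε m n : ℕ) (P : ℕ → Matrix (Fin m) (Fin n) ℂ) :
    Matrix ((Fin (k - ε) × Fin m) ⊕ (Fin ε × Fin n))
      ((Fin (ε + 1) × Fin n) ⊕ (Fin (k - 1 - ε) × Fin m)) (Polynomial ℂ) :=
  Matrix.fromBlocks (MC k ε m n P) (KC 2 (k - 1 - ε) (k - ε) m).transpose
    (KC r ε (ε + 1) n) 0


section ChebAux
open Kronecker

lemma cheb_sum (r rows : ℕ) (j : Fin rows) :
    ∑ i : Fin (rows+1),
      (if (i:ℕ) = (j:ℕ) then 1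
        else if (i:ℕ) = (j:ℕ)+1 then (if (j:ℕ)+1 = rows then -chebP r 1 else -(2*X))
        else if (i:ℕ) = (j:ℕ)+2 then 1 else 0) * chebP r (rows - (i:ℕ)) = 0 := by
  rw [Fin.sum_univ_eq_sum_range (fun i =>
      (if i = (j:ℕ) then 1
        else if i = (j:ℕ)+1 then (if (j:ℕ)+1 = rows then -chebP r 1 else -(2*X))
        else if i = (j:ℕ)+2 then 1 else 0) * chebP r (rows - i)) (rows+1)]
  rcases lt_or_eq_of_le (Nat.succ_le_of_lt j.isLt) with hj | hj
  · calc ∑ i ∈ Finset.range (rows+1),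
          (if i = (j:ℕ) then 1
            else if i = (j:ℕ)+1 then (if (j:ℕ)+1 = rows then -chebP r 1 else -(2*X))
            else if i = (j:ℕ)+2 then 1 else 0) * chebP r (rows - i)
        = ∑ i ∈ Finset.range (rows+1),
          ((if i = (j:ℕ) then chebP r (rows - (j:ℕ)) else 0)
            + (if i = (j:ℕ)+1 then -(2*X) * chebP r (rows - ((j:ℕ)+1)) else 0)
            + (if i = (j:ℕ)+2 then chebP r (rows - ((j:ℕ)+2)) else 0)) := by
          refine Finset.sum_congr rfl fun i hi => ?_
          have hne : (j:ℕ)+1 ≠ rows := by omega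
          split_ifs with h1 h2' h3 <;> subst_vars <;> simp <;> omega
      _ = chebP r (rows - (j:ℕ)) + (-(2*X) * chebP r (rows - ((j:ℕ)+1)))
            + chebP r (rows - ((j:ℕ)+2)) := by
          rw [Finset.sum_add_distrib, Finset.sum_add_distrib,
            Finset.sum_ite_eq' _ ((j:ℕ)), Finset.sum_ite_eq' _ ((j:ℕ)+1),
            Finset.sum_ite_eq' _ ((j:ℕ)+2),
            if_pos (Finset.mem_range.mpr (by omega)),
            if_pos (Finset.mem_range.mpr (by omega)),
            if_pos (Finset.mem_range.mpr (by omega))]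
      _ = 0 := by
          obtain ⟨a, ha⟩ : ∃ a, rows - ((j:ℕ)+2) = a := ⟨rows - (j+2), rfl⟩
          rw [ha, show rows - ((j:ℕ)+1) = a + 1 by omega, show rows - (j:ℕ) = a + 2 by omega,
            show chebP r (a+2) = 2 * X * chebP r (a+1) - chebP r a from rfl]
          ring
  · calc ∑ i ∈ Finset.range (rows+1),
          (if i = (j:ℕ) then 1
            else if i = (j:ℕ)+1 then (if (j:ℕ)+1 = rows then -chebP r 1 else -(2*X))
            else if i = (j:ℕ)+2 then 1 else 0) * chebP r (rows - i)
        = ∑ i ∈ Finset.range (rows+1),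
          ((if i = (j:ℕ) then chebP r 1 else 0)
            + (if i = (j:ℕ)+1 then -chebP r 1 else 0)) := by
          refine Finset.sum_congr rfl fun i hi => ?_
          simp only [Finset.mem_range] at hi
          have h1 : rows - (j:ℕ) = 1 := by omega
          have h0 : rows - ((j:ℕ)+1) = 0 := by omega
          have hne : (j:ℕ) ≠ (j:ℕ)+1 := by omega
          have hi2 : i ≠ (j:ℕ)+2 := by omega
          split_ifs with a b c <;>
            first
            | (exfalso; omega)
            | (subst a; rw [h1]; simp [hne])
            | (subst b; rw [h0, hj]; simp [chebP])
            | (subst c; rw [h0]; simp [chebP])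
            | simp
      _ = chebP r 1 + (- chebP r 1) := by
          rw [Finset.sum_add_distrib, Finset.sum_ite_eq' _ ((j:ℕ)), Finset.sum_ite_eq' _ ((j:ℕ)+1),
            if_pos (Finset.mem_range.mpr (by omega)), if_pos (Finset.mem_range.mpr (by omega))]
      _ = 0 := by ring

set_option maxHeartbeats 800000 in
lemma KD_zero (r rows sz : ℕ) : KC r rows (rows+1) sz * D1C r rows sz = 0 := by
  refine Matrix.ext fun p t => ?_
  obtain ⟨j, s⟩ := p
  simp only [Matrix.mul_apply, KC, D1C, Matrix.of_apply, Matrix.zero_apply,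
    Fintype.sum_prod_type]
  by_cases hst : s = t
  · subst hst
    have : ∀ i : Fin (rows+1), ∀ u : Fin sz,
        ((if (i:ℕ) = (j:ℕ) then 1
          else if (i:ℕ) = (j:ℕ)+1 then (if (j:ℕ)+1 = rows then -chebP r 1 else -(2*X))
          else if (i:ℕ) = (j:ℕ)+2 then 1 else 0) * (if s = u then 1 else 0)) *
          (chebP r (rows - (i:ℕ)) * (if u = s then 1 else 0))
        = (if u = s then
            (if (i:ℕ) = (j:ℕ) then 1
            else if (i:ℕ) = (j:ℕ)+1 then (if (j:ℕ)+1 = rows then -chebP r 1 else -(2*X))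
            else if (i:ℕ) = (j:ℕ)+2 then 1 else 0) * chebP r (rows - (i:ℕ)) else 0) := by
      intro i u
      by_cases h : u = s
      · subst h; simp
      · simp [h, Ne.symm h]
    simp only [this, Finset.sum_ite_eq' Finset.univ s, Finset.mem_univ, if_true]
    exact cheb_sum r rows j
  · have : ∀ i : Fin (rows+1), ∀ u : Fin sz,
        ((if (i:ℕ) = (j:ℕ) then 1
          else if (i:ℕ) = (j:ℕ)+1 then (if (j:ℕ)+1 = rows then -chebP r 1 else -(2*X))
          else if (i:ℕ) = (j:ℕ)+2 then 1 else 0) * (if s = u then 1 else 0)) *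
          (chebP r (rows - (i:ℕ)) * (if u = t then 1 else 0)) = 0 := by
      intro i u
      by_cases h : u = t
      · subst h; simp [hst]
      · simp [h]
    exact Finset.sum_eq_zero fun i _ => Finset.sum_eq_zero fun u _ => this i u

lemma rank_K (r rows cols sz : ℕ) (h : rows ≤ cols) (lam : ℂ) :
    ((KC r rows cols sz).map (eval lam)).rank = rows * sz := by
  set A : Matrix (Fin rows) (Fin cols) ℂ := Matrix.of fun j i =>
    (if (i:ℕ) = (j:ℕ) then 1
      else if (i:ℕ) = (j:ℕ) + 1 then
        (if (j:ℕ) + 1 = rows then -eval lam (chebP r 1) else -(2 * lam))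
      else if (i:ℕ) = (j:ℕ) + 2 then 1 else 0) with hA
  have hKA : (KC r rows cols sz).map (eval lam) = A ⊗ₖ (1 : Matrix (Fin sz) (Fin sz) ℂ) := by
    ext ⟨j, s⟩ ⟨i, u⟩
    simp only [Matrix.map_apply, KC, Matrix.of_apply, kroneckerMap_apply, hA,
      Matrix.one_apply, eval_mul]
    congr 1
    · split_ifs <;> simp [chebP] <;> ring
    · split_ifs <;> simp
  set E : Matrix (Fin cols) (Fin rows) ℂ := Matrix.of fun i j =>
    if i = Fin.castLE h j then 1 else 0 with hE
  have hAE : A * E = A.submatrix id (Fin.castLE h) := by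
    ext j j'
    simp only [Matrix.mul_apply, hE, Matrix.of_apply, mul_ite, mul_one, mul_zero,
      Finset.sum_ite_eq', Finset.mem_univ, if_true, Matrix.submatrix_apply, id]
  set T := A.submatrix id (Fin.castLE h) with hT
  have htri : T.BlockTriangular id := by
    intro j j' hlt
    simp only [hT, Matrix.submatrix_apply, hA, Matrix.of_apply, id] at hlt ⊢
    have h1 : ((Fin.castLE h j' : Fin cols) : ℕ) = (j' : ℕ) := rfl
    rw [h1, if_neg (by omega), if_neg (by omega), if_neg (by omega)]
  have hdiag : ∀ j, T j j = 1 := by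
    intro j
    simp [hT, hA]
  have hdet : T.det = 1 := by
    rw [Matrix.det_of_upperTriangular htri]
    simp [hdiag]
  have hTinv : T * T⁻¹ = 1 := Matrix.mul_nonsing_inv T (by rw [hdet]; exact isUnit_one)
  have hright : ((KC r rows cols sz).map (eval lam)) *
      ((E * T⁻¹) ⊗ₖ (1 : Matrix (Fin sz) (Fin sz) ℂ)) = 1 := by
    rw [hKA, ← Matrix.mul_kronecker_mul, Matrix.one_mul, ← Matrix.mul_assoc, hAE, hTinv,
      Matrix.one_kronecker_one]
  refine le_antisymm ?_ ?_
  · simpa using ((KC r rows cols sz).map (eval lam)).rank_le_card_height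
  · calc rows * sz = (1 : Matrix (Fin rows × Fin sz) (Fin rows × Fin sz) ℂ).rank := by
          simp [Matrix.rank_one]
    _ ≤ _ := by
          rw [← hright]
          exact Matrix.rank_mul_le_left _ _

lemma rank_D1 (r e n : ℕ) (lam : ℂ) : ((D1C r e n).map (eval lam)).rank = n := by
  set S : Matrix (Fin n) (Fin (e+1) × Fin n) ℂ := Matrix.of fun t p =>
    if p = (Fin.last e, t) then 1 else 0 with hS
  have hSD : S * ((D1C r e n).map (eval lam)) = 1 := by
    ext t t'
    simp only [Matrix.mul_apply, hS, Matrix.of_apply, Matrix.map_apply, D1C, ite_mul, one_mul,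
      zero_mul, Finset.sum_ite_eq', Finset.mem_univ, if_true]
    rw [Fin.val_last, Nat.sub_self]
    simp [chebP, Matrix.one_apply, apply_ite (eval lam)]
  refine le_antisymm ?_ ?_
  · simpa using ((D1C r e n).map (eval lam)).rank_le_card_width
  · calc n = (1 : Matrix (Fin n) (Fin n) ℂ).rank := by simp [Matrix.rank_one]
    _ ≤ _ := by rw [← hSD]; exact Matrix.rank_mul_le_right _ _

lemma D2C_eq (r e m : ℕ) : D2C r (e+1) m = D1C r e m := by
  ext p t
  simp [D2C, D1C]

end ChebAux

/-- Duality and minimality for the Chebyshev pencils: for `r ∈ {1,2}`,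
`K_1^{(C,r)}(λ) D_1^{(C,r)}(λ) = 0` (for `1 ≤ ε ≤ k-1`) and
`K_2^{(C,r)}(λ) D_2^{(C,r)}(λ) = 0` (for `0 ≤ ε ≤ k-2`); moreover, for every `λ_0 ∈ ℂ`
the evaluations of `K_1^{(C,r)}`, `K_2^{(C,r)}` have full row rank and those of
`D_1^{(C,r)}`, `D_2^{(C,r)}` have full column rank. -/
theorem chebyshev_dual_minimal_bases
    (k ε m n : ℕ) (hk : 2 ≤ k) (hε : ε ≤ k - 1) (hm : 0 < m) (hn : 0 < n)
    (r : ℕ) (hr : r = 1 ∨ r = 2) :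
    (1 ≤ ε → KC r ε (ε + 1) n * D1C r ε n = 0) ∧
    (ε ≤ k - 2 → KC r (k - 1 - ε) (k - ε) m * D2C r (k - ε) m = 0) ∧
    (∀ lam : ℂ, ((KC r ε (ε + 1) n).map (eval lam)).rank = ε * n) ∧
    (∀ lam : ℂ, ((KC r (k - 1 - ε) (k - ε) m).map (eval lam)).rank = (k - 1 - ε) * m) ∧
    (∀ lam : ℂ, ((D1C r ε n).map (eval lam)).rank = n) ∧
    (∀ lam : ℂ, ((D2C r (k - ε) m).map (eval lam)).rank = m) := by
  refine ⟨fun _ => KD_zero r ε n, ?_, fun lam => rank_K r ε (ε+1) n (by omega) lam,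
    fun lam => rank_K r (k-1-ε) (k-ε) m (by omega) lam, fun lam => rank_D1 r ε n lam, ?_⟩
  · intro _
    rw [show k - ε = (k - 1 - ε) + 1 from by omega, D2C_eq]
    exact KD_zero r (k - 1 - ε) m
  · intro lam
    rw [show k - ε = (k - 1 - ε) + 1 from by omega, D2C_eq]
    exact rank_D1 r (k - 1 - ε) m lam
end
end

section
/- For every ε ≥ 1 and every 1 ≤ i ≤ k−ε−1, the Chebyshev–Horner shifts satisfy P_{ε,r}^{i+1}(λ) = 2λ·P_{ε,r}^{i}(λ) − P_{ε−1,r}^{i}(λ) + P_{k−i−1}·φ_ε^{(r)}(λ) identically in λ; moreover, if P_k ≠ 0 then the matrix polynomial P_{ε,r}^{i}(λ) has degree exactly ε + i (some entry has degree ε+i and no entry has larger degree). -/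
open Polynomial Matrix

noncomputable section

/-- The `i`-th Chebyshev–Horner shift of `P` associated with `e`:
`P_{e,r}^i(λ) = Σ_{j=0}^{i} P_{k-i+j} φ_{e+j}^{(r)}(λ)`. -/
def PHC (r k m n : ℕ) (P : ℕ → Matrix (Fin m) (Fin n) ℂ) (e i : ℕ) :
    Matrix (Fin m) (Fin n) (Polynomial ℂ) :=
  ∑ j ∈ Finset.range (i + 1), chebP r (e + j) • (P (k - i + j)).map C

/-! Shifting the summation index and applying `φ_{j+2} = 2λ φ_{j+1} - φ_j` termwise gives the
recurrence. Since `deg φ_j = j`, the entries of `P_{ε,r}^i` have degree at most `ε + i`, and an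
entry where `P_k` is nonzero has its top term `P_k φ_{ε+i}` strictly dominating the others. -/

section DegreeOfCombination

variable {R : Type*} [Semiring R] {f : ℕ → R[X]}

theorem degree_mul_C_le (p : R[X]) (a : R) : (p * C a).degree ≤ p.degree :=
  (degree_mul_le _ _).trans <| (add_le_add_right degree_C_le _).trans_eq (add_zero _)

theorem degree_sum_range_mul_C_le (hf : ∀ j, (f j).degree ≤ j) (c : ℕ → R) (e i : ℕ) :
    (∑ j ∈ Finset.range (i + 1), f (e + j) * C (c j)).degree ≤ ((e + i : ℕ) : WithBot ℕ) := by
  refine (degree_sum_le _ _).trans (Finset.sup_le fun j hj => ?_)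
  have hji : e + j ≤ e + i := by have := Finset.mem_range.mp hj; omega
  exact (degree_mul_C_le _ _).trans <| (hf _).trans <| by exact_mod_cast hji

theorem degree_sum_range_mul_C_eq [NoZeroDivisors R] (hf : ∀ j, (f j).degree = j) (c : ℕ → R)
    (e i : ℕ) (hc : c i ≠ 0) :
    (∑ j ∈ Finset.range (i + 1), f (e + j) * C (c j)).degree = ((e + i : ℕ) : WithBot ℕ) := by
  have htop : (f (e + i) * C (c i)).degree = ((e + i : ℕ) : WithBot ℕ) := by
    rw [degree_mul_C hc, hf]
  rw [Finset.sum_range_succ, degree_add_eq_right_of_degree_lt, htop]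
  rw [htop]
  refine (degree_sum_le _ _).trans_lt ((Finset.sup_lt_iff (WithBot.bot_lt_coe _)).2 fun j hj => ?_)
  have hji : e + j < e + i := by have := Finset.mem_range.mp hj; omega
  exact (degree_mul_C_le _ _).trans_lt <| (hf _).trans_lt <| by exact_mod_cast hji

end DegreeOfCombination

theorem chebP_add_two (r i : ℕ) : chebP r (i + 2) = 2 * X * chebP r (i + 1) - chebP r i := rfl

theorem degree_chebP (r : ℕ) : ∀ i : ℕ, (chebP r i).degree = i
  | 0 => by simp [chebP]
  | 1 => by by_cases h : r = 1 <;> simp only [chebP, h, if_true, if_false] <;> compute_degree!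
  | i + 2 => by
      have hmul : (2 * X * chebP r (i + 1)).degree = ((i + 2 : ℕ) : WithBot ℕ) := by
        rw [degree_mul, degree_chebP r (i + 1), show (2 * X : ℂ[X]).degree = 1 by compute_degree!]
        exact_mod_cast (by omega : 1 + (i + 1) = i + 2)
      rw [chebP_add_two, degree_sub_eq_left_of_degree_lt, hmul]
      rw [hmul, degree_chebP r i]
      exact_mod_cast (by omega : i < i + 2)

section ChebyshevHornerShift

variable (r k m n : ℕ) (P : ℕ → Matrix (Fin m) (Fin n) ℂ)

theorem PHC_apply (e i : ℕ) (s : Fin m) (t : Fin n) :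
    PHC r k m n P e i s t = ∑ j ∈ Finset.range (i + 1), chebP r (e + j) * C (P (k - i + j) s t) := by
  simp only [PHC, Matrix.sum_apply, Matrix.smul_apply, Matrix.map_apply, smul_eq_mul]

theorem PHC_succ_succ (e i : ℕ) (hik : i + 1 ≤ k) :
    PHC r k m n P (e + 1) (i + 1) =
      (2 * X : ℂ[X]) • PHC r k m n P (e + 1) i - PHC r k m n P e i +
        chebP r (e + 1) • (P (k - i - 1)).map C := by
  have hshift : ∀ j ∈ Finset.range (i + 1),
      chebP r (e + 1 + (j + 1)) • (P (k - (i + 1) + (j + 1))).map C =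
        (2 * X : ℂ[X]) • (chebP r (e + 1 + j) • (P (k - i + j)).map C) -
          chebP r (e + j) • (P (k - i + j)).map C := by
    intro j _
    rw [show e + 1 + (j + 1) = e + j + 2 by omega, show k - (i + 1) + (j + 1) = k - i + j by omega,
      chebP_add_two, sub_smul, smul_smul, add_right_comm]
  unfold PHC
  rw [Finset.sum_range_succ', Finset.sum_congr rfl hshift, Finset.sum_sub_distrib,
    ← Finset.smul_sum, show k - (i + 1) + 0 = k - i - 1 by omega, add_zero]

theorem degree_PHC_apply_le (e i : ℕ) (s : Fin m) (t : Fin n) :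
    (PHC r k m n P e i s t).degree ≤ ((e + i : ℕ) : WithBot ℕ) := by
  rw [PHC_apply]
  exact degree_sum_range_mul_C_le (fun j => (degree_chebP r j).le) _ e i

theorem exists_degree_PHC_apply_eq (e i : ℕ) (hik : i ≤ k) (hPk : P k ≠ 0) :
    ∃ s t, (PHC r k m n P e i s t).degree = ((e + i : ℕ) : WithBot ℕ) := by
  obtain ⟨s, t, hst⟩ : ∃ s t, P k s t ≠ 0 := by
    by_contra! h
    exact hPk (Matrix.ext h)
  refine ⟨s, t, ?_⟩
  rw [PHC_apply]
  exact degree_sum_range_mul_C_eq (degree_chebP r) _ e i (by rwa [Nat.sub_add_cancel hik])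

end ChebyshevHornerShift

theorem chebyshev_horner_recurrence_and_degree_general
    (k m n : ℕ)
    (r : ℕ)
    (P : ℕ → Matrix (Fin m) (Fin n) ℂ) :
    ∀ ε : ℕ, 1 ≤ ε → ∀ i : ℕ, 1 ≤ i → i ≤ k - ε - 1 →
      (PHC r k m n P ε (i + 1) =
        ((2 * X : Polynomial ℂ)) • PHC r k m n P ε i - PHC r k m n P (ε - 1) i +
          chebP r ε • (P (k - i - 1)).map C) ∧
      (P k ≠ 0 →
        (∃ s t, ((PHC r k m n P ε i) s t).degree = ((ε + i : ℕ) : WithBot ℕ)) ∧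
        (∀ s t, ((PHC r k m n P ε i) s t).degree ≤ ((ε + i : ℕ) : WithBot ℕ))) := by
  intro ε hε i _ hik
  obtain ⟨e, rfl⟩ : ∃ e, ε = e + 1 := ⟨ε - 1, by omega⟩
  refine ⟨PHC_succ_succ r k m n P e i (by omega), fun hPk => ⟨?_, degree_PHC_apply_le r k m n P _ i⟩⟩
  exact exists_degree_PHC_apply_eq r k m n P _ i (by omega) hPk

/-- Chebyshev–Horner recurrence and degree: for every `ε ≥ 1` and `1 ≤ i ≤ k-ε-1`,
`P_{ε,r}^{i+1}(λ) = 2λ P_{ε,r}^i(λ) - P_{ε-1,r}^i(λ) + P_{k-i-1} φ_ε^{(r)}(λ)`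
identically in `λ`; moreover, if `P_k ≠ 0` then `P_{ε,r}^i(λ)` has degree exactly
`ε + i` (some entry has degree `ε + i` and no entry has larger degree). -/
theorem chebyshev_horner_recurrence_and_degree
    (k m n : ℕ) (hk : 2 ≤ k) (hm : 0 < m) (hn : 0 < n)
    (r : ℕ) (hr : r = 1 ∨ r = 2)
    (P : ℕ → Matrix (Fin m) (Fin n) ℂ) :
    ∀ ε : ℕ, 1 ≤ ε → ∀ i : ℕ, 1 ≤ i → i ≤ k - ε - 1 →
      (PHC r k m n P ε (i + 1) =
        ((2 * X : Polynomial ℂ)) • PHC r k m n P ε i - PHC r k m n P (ε - 1) i +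
          chebP r ε • (P (k - i - 1)).map C) ∧
      (P k ≠ 0 →
        (∃ s t, ((PHC r k m n P ε i) s t).degree = ((ε + i : ℕ) : WithBot ℕ)) ∧
        (∀ s t, ((PHC r k m n P ε i) s t).degree ≤ ((ε + i : ℕ) : WithBot ℕ))) :=
  chebyshev_horner_recurrence_and_degree_general k m n r P
end
end
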